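/- Let X and Y be real-valued random variables with E[X²] < ∞ and E[Y²] < ∞. Then dCov²(X,Y) = 0 if and only if X and Y are independent. -/

import Mathlib

set_option linter.unusedSectionVars false

open MeasureTheory ProbabilityTheory Set ENNReal

noncomputable def indA (x : ℝ) (p : ℝ × ℝ) : ℝ := if p.1 ≤ x then 1 else 0
noncomputable def indB (y : ℝ) (p : ℝ × ℝ) : ℝ := if p.2 ≤ y then 1 else 0

lemma indA_sq (x : ℝ) (p : ℝ × ℝ) : indA x p ^ 2 = indA x p := by
  unfold indA; split_ifs <;> norm_num

lemma indB_sq (y : ℝ) (p : ℝ × ℝ) : indB y p ^ 2 = indB y p := by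
  unfold indB; split_ifs <;> norm_num

lemma measurable_indA (x : ℝ) : Measurable (indA x) := by
  unfold indA
  exact Measurable.ite (measurableSet_le measurable_fst measurable_const)
    measurable_const measurable_const

lemma measurable_indB (y : ℝ) : Measurable (indB y) := by
  unfold indB
  exact Measurable.ite (measurableSet_le measurable_snd measurable_const)
    measurable_const measurable_const

lemma indA_eq_indicator (x : ℝ) :
    indA x = Set.indicator {p : ℝ × ℝ | p.1 ≤ x} (fun _ => (1:ℝ)) := by
  funext p; simp [indA, Set.indicator_apply]

lemma indB_eq_indicator (y : ℝ) :
    indB y = Set.indicator {p : ℝ × ℝ | p.2 ≤ y} (fun _ => (1:ℝ)) := by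
  funext p; simp [indB, Set.indicator_apply]

lemma indAB_eq_indicator (x y : ℝ) :
    (fun p => indA x p * indB y p)
      = Set.indicator {p : ℝ × ℝ | p.1 ≤ x ∧ p.2 ≤ y} (fun _ => (1:ℝ)) := by
  funext p; simp [indA, indB, Set.indicator_apply]
  split_ifs with h1 h2 h3 h3 <;> simp_all

lemma measurableSet_A (x : ℝ) : MeasurableSet {p : ℝ × ℝ | p.1 ≤ x} :=
  measurableSet_le measurable_fst measurable_const

lemma measurableSet_B (y : ℝ) : MeasurableSet {p : ℝ × ℝ | p.2 ≤ y} :=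
  measurableSet_le measurable_snd measurable_const

lemma measurableSet_AB (x y : ℝ) : MeasurableSet {p : ℝ × ℝ | p.1 ≤ x ∧ p.2 ≤ y} :=
  (measurableSet_A x).inter (measurableSet_B y)

variable {m : Measure (ℝ × ℝ)} [IsFiniteMeasure m]

lemma integrable_indA (x : ℝ) : Integrable (indA x) m := by
  rw [indA_eq_indicator]
  exact (integrable_const (1:ℝ)).indicator (measurableSet_A x)

lemma integrable_indB (y : ℝ) : Integrable (indB y) m := by
  rw [indB_eq_indicator]
  exact (integrable_const (1:ℝ)).indicator (measurableSet_B y)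

lemma integrable_indAB (x y : ℝ) : Integrable (fun p => indA x p * indB y p) m := by
  rw [indAB_eq_indicator]
  exact (integrable_const (1:ℝ)).indicator (measurableSet_AB x y)

lemma integral_indA (x : ℝ) : ∫ p, indA x p ∂m = (m {p : ℝ × ℝ | p.1 ≤ x}).toReal := by
  rw [indA_eq_indicator, integral_indicator_const (1:ℝ) (measurableSet_A x), smul_eq_mul, mul_one, measureReal_def]

lemma integral_indB (y : ℝ) : ∫ p, indB y p ∂m = (m {p : ℝ × ℝ | p.2 ≤ y}).toReal := by
  rw [indB_eq_indicator, integral_indicator_const (1:ℝ) (measurableSet_B y), smul_eq_mul, mul_one, measureReal_def]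

lemma integral_indAB (x y : ℝ) :
    ∫ p, indA x p * indB y p ∂m = (m {p : ℝ × ℝ | p.1 ≤ x ∧ p.2 ≤ y}).toReal := by
  rw [indAB_eq_indicator, integral_indicator_const (1:ℝ) (measurableSet_AB x y), smul_eq_mul,
    mul_one, measureReal_def]

/-- 1D key identity: `∫ (1_{s≤u} - 1_{t≤u})² du = |s - t|`. -/
lemma lintegral_e (s t : ℝ) :
    ∫⁻ u : ℝ, ENNReal.ofReal (((if s ≤ u then (1:ℝ) else 0) - (if t ≤ u then 1 else 0))^2)
      = ENNReal.ofReal |s - t| := by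
  have h : ∀ u : ℝ, ENNReal.ofReal (((if s ≤ u then (1:ℝ) else 0) - (if t ≤ u then 1 else 0))^2)
      = Set.indicator (Set.Ico (min s t) (max s t)) (fun _ => (1:ℝ≥0∞)) u := by
    intro u
    rcases le_total s t with hst | hst
    · rw [min_eq_left hst, max_eq_right hst]
      by_cases h1 : s ≤ u
      · by_cases h2 : t ≤ u
        · rw [if_pos h1, if_pos h2]
          have hu : u ∉ Set.Ico s t := fun hu => (not_lt.mpr h2) hu.2
          simp [Set.indicator_apply, hu]
        · rw [if_pos h1, if_neg h2]
          have hu : u ∈ Set.Ico s t := ⟨h1, lt_of_not_ge h2⟩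
          simp [Set.indicator_apply, hu]
      · have h2 : ¬ t ≤ u := fun h => h1 (hst.trans h)
        rw [if_neg h1, if_neg h2]
        have hu : u ∉ Set.Ico s t := fun hu => h1 hu.1
        simp [Set.indicator_apply, hu]
    · rw [min_eq_right hst, max_eq_left hst]
      by_cases h2 : t ≤ u
      · by_cases h1 : s ≤ u
        · rw [if_pos h1, if_pos h2]
          have hu : u ∉ Set.Ico t s := fun hu => (not_lt.mpr h1) hu.2
          simp [Set.indicator_apply, hu]
        · rw [if_neg h1, if_pos h2]
          have hu : u ∈ Set.Ico t s := ⟨h2, lt_of_not_ge h1⟩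
          simp [Set.indicator_apply, hu]
      · have h1 : ¬ s ≤ u := fun h => h2 (hst.trans h)
        rw [if_neg h1, if_neg h2]
        have hu : u ∉ Set.Ico t s := fun hu => h2 hu.1
        simp [Set.indicator_apply, hu]
  simp_rw [h]
  rw [lintegral_indicator measurableSet_Ico, setLIntegral_one, Real.volume_Ico,
    max_sub_min_eq_abs, abs_sub_comm]
section Part2
variable {α β : Type*} [MeasurableSpace α] [MeasurableSpace β]

lemma alg9 (u1 u2 v1 v2 : ℝ) (hu1 : u1^2 = u1) (hu2 : u2^2 = u2) (hv1 : v1^2 = v1)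
    (hv2 : v2^2 = v2) :
    (u1 - u2)^2 * (v1 - v2)^2
      = u1*v1 + u1*v2 + v1*u2 + u2*v2
        - 2*(u1*v1*v2) - 2*(v1*(u2*v2)) - 2*(u1*v1*u2) - 2*(u1*(u2*v2))
        + 4*(u1*v1*(u2*v2)) := by
  linear_combination (v1-v2)^2 * hu1 + (v1-v2)^2 * hu2 + (u1+u2-2*u1*u2) * hv1
    + (u1+u2-2*u1*u2) * hv2

lemma alg3 (u1 u2 : ℝ) (hu1 : u1^2 = u1) (hu2 : u2^2 = u2) :
    (u1 - u2)^2 = u1 + u2 - 2*(u1*u2) := by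
  linear_combination hu1 + hu2

lemma integral_comb3 {m : Measure α} {f1 f2 f3 : α → ℝ}
    (h1 : Integrable f1 m) (h2 : Integrable f2 m) (h3 : Integrable f3 m) :
    ∫ w, (f1 w + f2 w - 2*f3 w) ∂m
      = ∫ w, f1 w ∂m + ∫ w, f2 w ∂m - 2*∫ w, f3 w ∂m := by
  have A1 : Integrable (fun w => f1 w + f2 w) m := h1.add h2
  rw [integral_sub A1 (h3.const_mul 2), integral_add h1 h2, integral_const_mul]

lemma integral_comb9 {m : Measure α} {f1 f2 f3 f4 f5 f6 f7 f8 f9 : α → ℝ}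
    (h1 : Integrable f1 m) (h2 : Integrable f2 m) (h3 : Integrable f3 m)
    (h4 : Integrable f4 m) (h5 : Integrable f5 m) (h6 : Integrable f6 m)
    (h7 : Integrable f7 m) (h8 : Integrable f8 m) (h9 : Integrable f9 m) :
    ∫ w, (f1 w + f2 w + f3 w + f4 w - 2*f5 w - 2*f6 w - 2*f7 w - 2*f8 w + 4*f9 w) ∂m
      = ∫ w, f1 w ∂m + ∫ w, f2 w ∂m + ∫ w, f3 w ∂m + ∫ w, f4 w ∂m
        - 2*∫ w, f5 w ∂m - 2*∫ w, f6 w ∂m - 2*∫ w, f7 w ∂m - 2*∫ w, f8 w ∂m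
        + 4*∫ w, f9 w ∂m := by
  have A1 : Integrable (fun w => f1 w + f2 w) m := h1.add h2
  have A2 : Integrable (fun w => f1 w + f2 w + f3 w) m := A1.add h3
  have A3 : Integrable (fun w => f1 w + f2 w + f3 w + f4 w) m := A2.add h4
  have A4 : Integrable (fun w => f1 w + f2 w + f3 w + f4 w - 2*f5 w) m := A3.sub (h5.const_mul 2)
  have A5 : Integrable (fun w => f1 w + f2 w + f3 w + f4 w - 2*f5 w - 2*f6 w) m :=
    A4.sub (h6.const_mul 2)
  have A6 : Integrable (fun w => f1 w + f2 w + f3 w + f4 w - 2*f5 w - 2*f6 w - 2*f7 w) m :=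
    A5.sub (h7.const_mul 2)
  have A7 : Integrable
      (fun w => f1 w + f2 w + f3 w + f4 w - 2*f5 w - 2*f6 w - 2*f7 w - 2*f8 w) m :=
    A6.sub (h8.const_mul 2)
  rw [integral_add A7 (h9.const_mul 4), integral_sub A6 (h8.const_mul 2),
    integral_sub A5 (h7.const_mul 2), integral_sub A4 (h6.const_mul 2),
    integral_sub A3 (h5.const_mul 2), integral_add A2 h4, integral_add A1 h3,
    integral_add h1 h2, integral_const_mul, integral_const_mul, integral_const_mul,
    integral_const_mul, integral_const_mul]

lemma int_fst {mα : Measure α} {mβ : Measure β} [SigmaFinite mα] [SigmaFinite mβ] [IsProbabilityMeasure mβ]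
    (g : α → ℝ) : ∫ s : α × β, g s.1 ∂(mα.prod mβ) = ∫ p, g p ∂mα := by
  simpa using integral_prod_mul (μ := mα) (ν := mβ) g (fun _ => (1:ℝ))

lemma int_snd {mα : Measure α} {mβ : Measure β} [SigmaFinite mα] [SigmaFinite mβ] [IsProbabilityMeasure mα]
    (g : β → ℝ) : ∫ s : α × β, g s.2 ∂(mα.prod mβ) = ∫ p, g p ∂mβ := by
  simpa using integral_prod_mul (μ := mα) (ν := mβ) (fun _ => (1:ℝ)) g

lemma integrable_comp_fst {mα : Measure α} {mβ : Measure β} [SigmaFinite mα] [SigmaFinite mβ]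
    [IsFiniteMeasure mβ] {g : α → ℝ} (hg : Integrable g mα) :
    Integrable (fun s : α × β => g s.1) (mα.prod mβ) := by
  simpa using hg.mul_prod (integrable_const (1:ℝ))

lemma integrable_comp_snd {mα : Measure α} {mβ : Measure β} [SigmaFinite mα] [SigmaFinite mβ]
    [IsFiniteMeasure mα] {g : β → ℝ} (hg : Integrable g mβ) :
    Integrable (fun s : α × β => g s.2) (mα.prod mβ) := by
  simpa using (integrable_const (1:ℝ)).mul_prod hg

end Part2

section Law
variable (ν : Measure (ℝ × ℝ)) [IsProbabilityMeasure ν]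

lemma E2A_eq (x : ℝ) :
    ∫ w : (ℝ×ℝ)×(ℝ×ℝ), (indA x w.1 - indA x w.2)^2 ∂(ν.prod ν)
      = 2*(ν {p : ℝ×ℝ | p.1 ≤ x}).toReal - 2*((ν {p : ℝ×ℝ | p.1 ≤ x}).toReal
          * (ν {p : ℝ×ℝ | p.1 ≤ x}).toReal) := by
  have hpt : ∀ w : (ℝ×ℝ)×(ℝ×ℝ), (indA x w.1 - indA x w.2)^2
      = indA x w.1 + indA x w.2 - 2*(indA x w.1 * indA x w.2) :=
    fun w => alg3 _ _ (indA_sq x w.1) (indA_sq x w.2)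
  simp_rw [hpt]
  have i1 : Integrable (fun w : (ℝ×ℝ)×(ℝ×ℝ) => indA x w.1) (ν.prod ν) :=
    integrable_comp_fst (integrable_indA x)
  have i2 : Integrable (fun w : (ℝ×ℝ)×(ℝ×ℝ) => indA x w.2) (ν.prod ν) :=
    integrable_comp_snd (integrable_indA x)
  have i3 : Integrable (fun w : (ℝ×ℝ)×(ℝ×ℝ) => indA x w.1 * indA x w.2) (ν.prod ν) :=
    (integrable_indA x).mul_prod (integrable_indA x)
  rw [integral_comb3 i1 i2 i3]
  have v1 : ∫ w : (ℝ×ℝ)×(ℝ×ℝ), indA x w.1 ∂(ν.prod ν) = (ν {p : ℝ×ℝ | p.1 ≤ x}).toReal :=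
    (int_fst (indA x)).trans (integral_indA x)
  have v2 : ∫ w : (ℝ×ℝ)×(ℝ×ℝ), indA x w.2 ∂(ν.prod ν) = (ν {p : ℝ×ℝ | p.1 ≤ x}).toReal :=
    (int_snd (indA x)).trans (integral_indA x)
  have v3 : ∫ w : (ℝ×ℝ)×(ℝ×ℝ), indA x w.1 * indA x w.2 ∂(ν.prod ν)
      = (ν {p : ℝ×ℝ | p.1 ≤ x}).toReal * (ν {p : ℝ×ℝ | p.1 ≤ x}).toReal :=
    (integral_prod_mul _ _).trans (by rw [integral_indA])
  rw [v1, v2, v3]; ring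

lemma E2B_eq (y : ℝ) :
    ∫ w : (ℝ×ℝ)×(ℝ×ℝ), (indB y w.1 - indB y w.2)^2 ∂(ν.prod ν)
      = 2*(ν {p : ℝ×ℝ | p.2 ≤ y}).toReal - 2*((ν {p : ℝ×ℝ | p.2 ≤ y}).toReal
          * (ν {p : ℝ×ℝ | p.2 ≤ y}).toReal) := by
  have hpt : ∀ w : (ℝ×ℝ)×(ℝ×ℝ), (indB y w.1 - indB y w.2)^2
      = indB y w.1 + indB y w.2 - 2*(indB y w.1 * indB y w.2) :=
    fun w => alg3 _ _ (indB_sq y w.1) (indB_sq y w.2)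
  simp_rw [hpt]
  have i1 : Integrable (fun w : (ℝ×ℝ)×(ℝ×ℝ) => indB y w.1) (ν.prod ν) :=
    integrable_comp_fst (integrable_indB y)
  have i2 : Integrable (fun w : (ℝ×ℝ)×(ℝ×ℝ) => indB y w.2) (ν.prod ν) :=
    integrable_comp_snd (integrable_indB y)
  have i3 : Integrable (fun w : (ℝ×ℝ)×(ℝ×ℝ) => indB y w.1 * indB y w.2) (ν.prod ν) :=
    (integrable_indB y).mul_prod (integrable_indB y)
  rw [integral_comb3 i1 i2 i3]
  have v1 : ∫ w : (ℝ×ℝ)×(ℝ×ℝ), indB y w.1 ∂(ν.prod ν) = (ν {p : ℝ×ℝ | p.2 ≤ y}).toReal :=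
    (int_fst (indB y)).trans (integral_indB y)
  have v2 : ∫ w : (ℝ×ℝ)×(ℝ×ℝ), indB y w.2 ∂(ν.prod ν) = (ν {p : ℝ×ℝ | p.2 ≤ y}).toReal :=
    (int_snd (indB y)).trans (integral_indB y)
  have v3 : ∫ w : (ℝ×ℝ)×(ℝ×ℝ), indB y w.1 * indB y w.2 ∂(ν.prod ν)
      = (ν {p : ℝ×ℝ | p.2 ≤ y}).toReal * (ν {p : ℝ×ℝ | p.2 ≤ y}).toReal :=
    (integral_prod_mul _ _).trans (by rw [integral_indB])
  rw [v1, v2, v3]; ring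

end Law
section Law2
variable (ν : Measure (ℝ × ℝ)) [IsProbabilityMeasure ν]

lemma E1_eq (x y : ℝ) :
    ∫ w : (ℝ×ℝ)×(ℝ×ℝ), (indA x w.1 - indA x w.2)^2 * (indB y w.1 - indB y w.2)^2 ∂(ν.prod ν)
      = 2*(ν {p : ℝ×ℝ | p.1 ≤ x ∧ p.2 ≤ y}).toReal
        + 2*((ν {p : ℝ×ℝ | p.1 ≤ x}).toReal * (ν {p : ℝ×ℝ | p.2 ≤ y}).toReal)
        - 4*((ν {p : ℝ×ℝ | p.1 ≤ x ∧ p.2 ≤ y}).toReal * (ν {p : ℝ×ℝ | p.2 ≤ y}).toReal)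
        - 4*((ν {p : ℝ×ℝ | p.1 ≤ x ∧ p.2 ≤ y}).toReal * (ν {p : ℝ×ℝ | p.1 ≤ x}).toReal)
        + 4*((ν {p : ℝ×ℝ | p.1 ≤ x ∧ p.2 ≤ y}).toReal
            * (ν {p : ℝ×ℝ | p.1 ≤ x ∧ p.2 ≤ y}).toReal) := by
  have hpt : ∀ w : (ℝ×ℝ)×(ℝ×ℝ),
      (indA x w.1 - indA x w.2)^2 * (indB y w.1 - indB y w.2)^2
      = indA x w.1 * indB y w.1 + indA x w.1 * indB y w.2 + indB y w.1 * indA x w.2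
          + indA x w.2 * indB y w.2
        - 2*(indA x w.1 * indB y w.1 * indB y w.2)
        - 2*(indB y w.1 * (indA x w.2 * indB y w.2))
        - 2*(indA x w.1 * indB y w.1 * indA x w.2)
        - 2*(indA x w.1 * (indA x w.2 * indB y w.2))
        + 4*(indA x w.1 * indB y w.1 * (indA x w.2 * indB y w.2)) :=
    fun w => alg9 _ _ _ _ (indA_sq x w.1) (indA_sq x w.2) (indB_sq y w.1) (indB_sq y w.2)
  simp_rw [hpt]
  have i1 : Integrable (fun w : (ℝ×ℝ)×(ℝ×ℝ) => indA x w.1 * indB y w.1) (ν.prod ν) :=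
    integrable_comp_fst (integrable_indAB x y)
  have i2 : Integrable (fun w : (ℝ×ℝ)×(ℝ×ℝ) => indA x w.1 * indB y w.2) (ν.prod ν) :=
    (integrable_indA x).mul_prod (integrable_indB y)
  have i3 : Integrable (fun w : (ℝ×ℝ)×(ℝ×ℝ) => indB y w.1 * indA x w.2) (ν.prod ν) :=
    (integrable_indB y).mul_prod (integrable_indA x)
  have i4 : Integrable (fun w : (ℝ×ℝ)×(ℝ×ℝ) => indA x w.2 * indB y w.2) (ν.prod ν) :=
    integrable_comp_snd (integrable_indAB x y)
  have i5 : Integrable (fun w : (ℝ×ℝ)×(ℝ×ℝ) => indA x w.1 * indB y w.1 * indB y w.2)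
      (ν.prod ν) := (integrable_indAB x y).mul_prod (integrable_indB y)
  have i6 : Integrable (fun w : (ℝ×ℝ)×(ℝ×ℝ) => indB y w.1 * (indA x w.2 * indB y w.2))
      (ν.prod ν) := (integrable_indB y).mul_prod (integrable_indAB x y)
  have i7 : Integrable (fun w : (ℝ×ℝ)×(ℝ×ℝ) => indA x w.1 * indB y w.1 * indA x w.2)
      (ν.prod ν) := (integrable_indAB x y).mul_prod (integrable_indA x)
  have i8 : Integrable (fun w : (ℝ×ℝ)×(ℝ×ℝ) => indA x w.1 * (indA x w.2 * indB y w.2))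
      (ν.prod ν) := (integrable_indA x).mul_prod (integrable_indAB x y)
  have i9 : Integrable
      (fun w : (ℝ×ℝ)×(ℝ×ℝ) => indA x w.1 * indB y w.1 * (indA x w.2 * indB y w.2))
      (ν.prod ν) := (integrable_indAB x y).mul_prod (integrable_indAB x y)
  rw [integral_comb9 i1 i2 i3 i4 i5 i6 i7 i8 i9]
  have v1 : ∫ w : (ℝ×ℝ)×(ℝ×ℝ), indA x w.1 * indB y w.1 ∂(ν.prod ν)
      = (ν {p : ℝ×ℝ | p.1 ≤ x ∧ p.2 ≤ y}).toReal :=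
    (int_fst (fun p => indA x p * indB y p)).trans (integral_indAB x y)
  have v2 : ∫ w : (ℝ×ℝ)×(ℝ×ℝ), indA x w.1 * indB y w.2 ∂(ν.prod ν)
      = (ν {p : ℝ×ℝ | p.1 ≤ x}).toReal * (ν {p : ℝ×ℝ | p.2 ≤ y}).toReal :=
    (integral_prod_mul _ _).trans (by rw [integral_indA, integral_indB])
  have v3 : ∫ w : (ℝ×ℝ)×(ℝ×ℝ), indB y w.1 * indA x w.2 ∂(ν.prod ν)
      = (ν {p : ℝ×ℝ | p.2 ≤ y}).toReal * (ν {p : ℝ×ℝ | p.1 ≤ x}).toReal :=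
    (integral_prod_mul _ _).trans (by rw [integral_indA, integral_indB])
  have v4 : ∫ w : (ℝ×ℝ)×(ℝ×ℝ), indA x w.2 * indB y w.2 ∂(ν.prod ν)
      = (ν {p : ℝ×ℝ | p.1 ≤ x ∧ p.2 ≤ y}).toReal :=
    (int_snd (fun p => indA x p * indB y p)).trans (integral_indAB x y)
  have v5 : ∫ w : (ℝ×ℝ)×(ℝ×ℝ), indA x w.1 * indB y w.1 * indB y w.2 ∂(ν.prod ν)
      = (ν {p : ℝ×ℝ | p.1 ≤ x ∧ p.2 ≤ y}).toReal * (ν {p : ℝ×ℝ | p.2 ≤ y}).toReal :=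
    (integral_prod_mul (fun p => indA x p * indB y p) (indB y)).trans
      (by rw [integral_indAB, integral_indB])
  have v6 : ∫ w : (ℝ×ℝ)×(ℝ×ℝ), indB y w.1 * (indA x w.2 * indB y w.2) ∂(ν.prod ν)
      = (ν {p : ℝ×ℝ | p.2 ≤ y}).toReal * (ν {p : ℝ×ℝ | p.1 ≤ x ∧ p.2 ≤ y}).toReal :=
    (integral_prod_mul (indB y) (fun p => indA x p * indB y p)).trans
      (by rw [integral_indAB, integral_indB])
  have v7 : ∫ w : (ℝ×ℝ)×(ℝ×ℝ), indA x w.1 * indB y w.1 * indA x w.2 ∂(ν.prod ν)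
      = (ν {p : ℝ×ℝ | p.1 ≤ x ∧ p.2 ≤ y}).toReal * (ν {p : ℝ×ℝ | p.1 ≤ x}).toReal :=
    (integral_prod_mul (fun p => indA x p * indB y p) (indA x)).trans
      (by rw [integral_indAB, integral_indA])
  have v8 : ∫ w : (ℝ×ℝ)×(ℝ×ℝ), indA x w.1 * (indA x w.2 * indB y w.2) ∂(ν.prod ν)
      = (ν {p : ℝ×ℝ | p.1 ≤ x}).toReal * (ν {p : ℝ×ℝ | p.1 ≤ x ∧ p.2 ≤ y}).toReal :=
    (integral_prod_mul (indA x) (fun p => indA x p * indB y p)).trans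
      (by rw [integral_indAB, integral_indA])
  have v9 : ∫ w : (ℝ×ℝ)×(ℝ×ℝ),
        indA x w.1 * indB y w.1 * (indA x w.2 * indB y w.2) ∂(ν.prod ν)
      = (ν {p : ℝ×ℝ | p.1 ≤ x ∧ p.2 ≤ y}).toReal
          * (ν {p : ℝ×ℝ | p.1 ≤ x ∧ p.2 ≤ y}).toReal :=
    (integral_prod_mul (fun p => indA x p * indB y p) (fun p => indA x p * indB y p)).trans
      (by rw [integral_indAB])
  rw [v1, v2, v3, v4, v5, v6, v7, v8, v9]; ring

lemma E3_eq (x y : ℝ) :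
    ∫ w : (ℝ×ℝ)×((ℝ×ℝ)×(ℝ×ℝ)),
        (indA x w.1 - indA x w.2.1)^2 * (indB y w.1 - indB y w.2.2)^2 ∂(ν.prod (ν.prod ν))
      = (ν {p : ℝ×ℝ | p.1 ≤ x ∧ p.2 ≤ y}).toReal
        + 3*((ν {p : ℝ×ℝ | p.1 ≤ x}).toReal * (ν {p : ℝ×ℝ | p.2 ≤ y}).toReal)
        - 2*((ν {p : ℝ×ℝ | p.1 ≤ x ∧ p.2 ≤ y}).toReal * (ν {p : ℝ×ℝ | p.2 ≤ y}).toReal)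
        - 2*((ν {p : ℝ×ℝ | p.1 ≤ x}).toReal * (ν {p : ℝ×ℝ | p.2 ≤ y}).toReal
            * (ν {p : ℝ×ℝ | p.2 ≤ y}).toReal)
        - 2*((ν {p : ℝ×ℝ | p.1 ≤ x ∧ p.2 ≤ y}).toReal * (ν {p : ℝ×ℝ | p.1 ≤ x}).toReal)
        - 2*((ν {p : ℝ×ℝ | p.1 ≤ x}).toReal * (ν {p : ℝ×ℝ | p.1 ≤ x}).toReal
            * (ν {p : ℝ×ℝ | p.2 ≤ y}).toReal)
        + 4*((ν {p : ℝ×ℝ | p.1 ≤ x ∧ p.2 ≤ y}).toReal * (ν {p : ℝ×ℝ | p.1 ≤ x}).toReal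
            * (ν {p : ℝ×ℝ | p.2 ≤ y}).toReal) := by
  have hpt : ∀ w : (ℝ×ℝ)×((ℝ×ℝ)×(ℝ×ℝ)),
      (indA x w.1 - indA x w.2.1)^2 * (indB y w.1 - indB y w.2.2)^2
      = indA x w.1 * indB y w.1 + indA x w.1 * indB y w.2.2 + indB y w.1 * indA x w.2.1
          + indA x w.2.1 * indB y w.2.2
        - 2*(indA x w.1 * indB y w.1 * indB y w.2.2)
        - 2*(indB y w.1 * (indA x w.2.1 * indB y w.2.2))
        - 2*(indA x w.1 * indB y w.1 * indA x w.2.1)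
        - 2*(indA x w.1 * (indA x w.2.1 * indB y w.2.2))
        + 4*(indA x w.1 * indB y w.1 * (indA x w.2.1 * indB y w.2.2)) :=
    fun w => alg9 _ _ _ _ (indA_sq x w.1) (indA_sq x w.2.1) (indB_sq y w.1) (indB_sq y w.2.2)
  simp_rw [hpt]
  have iA2 : Integrable (fun s : (ℝ×ℝ)×(ℝ×ℝ) => indA x s.1) (ν.prod ν) :=
    integrable_comp_fst (integrable_indA x)
  have iB2 : Integrable (fun s : (ℝ×ℝ)×(ℝ×ℝ) => indB y s.2) (ν.prod ν) :=
    integrable_comp_snd (integrable_indB y)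
  have iAB2 : Integrable (fun s : (ℝ×ℝ)×(ℝ×ℝ) => indA x s.1 * indB y s.2) (ν.prod ν) :=
    (integrable_indA x).mul_prod (integrable_indB y)
  have i1 : Integrable (fun w : (ℝ×ℝ)×((ℝ×ℝ)×(ℝ×ℝ)) => indA x w.1 * indB y w.1)
      (ν.prod (ν.prod ν)) := integrable_comp_fst (integrable_indAB x y)
  have i2 : Integrable (fun w : (ℝ×ℝ)×((ℝ×ℝ)×(ℝ×ℝ)) => indA x w.1 * indB y w.2.2)
      (ν.prod (ν.prod ν)) := (integrable_indA x).mul_prod iB2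
  have i3 : Integrable (fun w : (ℝ×ℝ)×((ℝ×ℝ)×(ℝ×ℝ)) => indB y w.1 * indA x w.2.1)
      (ν.prod (ν.prod ν)) := (integrable_indB y).mul_prod iA2
  have i4 : Integrable (fun w : (ℝ×ℝ)×((ℝ×ℝ)×(ℝ×ℝ)) => indA x w.2.1 * indB y w.2.2)
      (ν.prod (ν.prod ν)) := integrable_comp_snd iAB2
  have i5 : Integrable
      (fun w : (ℝ×ℝ)×((ℝ×ℝ)×(ℝ×ℝ)) => indA x w.1 * indB y w.1 * indB y w.2.2)
      (ν.prod (ν.prod ν)) := (integrable_indAB x y).mul_prod iB2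
  have i6 : Integrable
      (fun w : (ℝ×ℝ)×((ℝ×ℝ)×(ℝ×ℝ)) => indB y w.1 * (indA x w.2.1 * indB y w.2.2))
      (ν.prod (ν.prod ν)) := (integrable_indB y).mul_prod iAB2
  have i7 : Integrable
      (fun w : (ℝ×ℝ)×((ℝ×ℝ)×(ℝ×ℝ)) => indA x w.1 * indB y w.1 * indA x w.2.1)
      (ν.prod (ν.prod ν)) := (integrable_indAB x y).mul_prod iA2
  have i8 : Integrable
      (fun w : (ℝ×ℝ)×((ℝ×ℝ)×(ℝ×ℝ)) => indA x w.1 * (indA x w.2.1 * indB y w.2.2))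
      (ν.prod (ν.prod ν)) := (integrable_indA x).mul_prod iAB2
  have i9 : Integrable
      (fun w : (ℝ×ℝ)×((ℝ×ℝ)×(ℝ×ℝ)) => indA x w.1 * indB y w.1 * (indA x w.2.1 * indB y w.2.2))
      (ν.prod (ν.prod ν)) := (integrable_indAB x y).mul_prod iAB2
  rw [integral_comb9 i1 i2 i3 i4 i5 i6 i7 i8 i9]
  have wA : ∫ s : (ℝ×ℝ)×(ℝ×ℝ), indA x s.1 ∂(ν.prod ν) = (ν {p : ℝ×ℝ | p.1 ≤ x}).toReal :=
    (int_fst (indA x)).trans (integral_indA x)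
  have wB : ∫ s : (ℝ×ℝ)×(ℝ×ℝ), indB y s.2 ∂(ν.prod ν) = (ν {p : ℝ×ℝ | p.2 ≤ y}).toReal :=
    (int_snd (indB y)).trans (integral_indB y)
  have wAB : ∫ s : (ℝ×ℝ)×(ℝ×ℝ), indA x s.1 * indB y s.2 ∂(ν.prod ν)
      = (ν {p : ℝ×ℝ | p.1 ≤ x}).toReal * (ν {p : ℝ×ℝ | p.2 ≤ y}).toReal :=
    (integral_prod_mul _ _).trans (by rw [integral_indA, integral_indB])
  have v1 : ∫ w : (ℝ×ℝ)×((ℝ×ℝ)×(ℝ×ℝ)), indA x w.1 * indB y w.1 ∂(ν.prod (ν.prod ν))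
      = (ν {p : ℝ×ℝ | p.1 ≤ x ∧ p.2 ≤ y}).toReal :=
    (int_fst (fun p => indA x p * indB y p)).trans (integral_indAB x y)
  have v2 : ∫ w : (ℝ×ℝ)×((ℝ×ℝ)×(ℝ×ℝ)), indA x w.1 * indB y w.2.2 ∂(ν.prod (ν.prod ν))
      = (ν {p : ℝ×ℝ | p.1 ≤ x}).toReal * (ν {p : ℝ×ℝ | p.2 ≤ y}).toReal :=
    (integral_prod_mul (indA x) (fun s : (ℝ×ℝ)×(ℝ×ℝ) => indB y s.2)).trans
      (by rw [integral_indA, wB])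
  have v3 : ∫ w : (ℝ×ℝ)×((ℝ×ℝ)×(ℝ×ℝ)), indB y w.1 * indA x w.2.1 ∂(ν.prod (ν.prod ν))
      = (ν {p : ℝ×ℝ | p.2 ≤ y}).toReal * (ν {p : ℝ×ℝ | p.1 ≤ x}).toReal :=
    (integral_prod_mul (indB y) (fun s : (ℝ×ℝ)×(ℝ×ℝ) => indA x s.1)).trans
      (by rw [integral_indB, wA])
  have v4 : ∫ w : (ℝ×ℝ)×((ℝ×ℝ)×(ℝ×ℝ)), indA x w.2.1 * indB y w.2.2 ∂(ν.prod (ν.prod ν))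
      = (ν {p : ℝ×ℝ | p.1 ≤ x}).toReal * (ν {p : ℝ×ℝ | p.2 ≤ y}).toReal :=
    (int_snd (fun s : (ℝ×ℝ)×(ℝ×ℝ) => indA x s.1 * indB y s.2)).trans wAB
  have v5 : ∫ w : (ℝ×ℝ)×((ℝ×ℝ)×(ℝ×ℝ)),
        indA x w.1 * indB y w.1 * indB y w.2.2 ∂(ν.prod (ν.prod ν))
      = (ν {p : ℝ×ℝ | p.1 ≤ x ∧ p.2 ≤ y}).toReal * (ν {p : ℝ×ℝ | p.2 ≤ y}).toReal :=
    (integral_prod_mul (fun p => indA x p * indB y p)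
      (fun s : (ℝ×ℝ)×(ℝ×ℝ) => indB y s.2)).trans (by rw [integral_indAB, wB])
  have v6 : ∫ w : (ℝ×ℝ)×((ℝ×ℝ)×(ℝ×ℝ)),
        indB y w.1 * (indA x w.2.1 * indB y w.2.2) ∂(ν.prod (ν.prod ν))
      = (ν {p : ℝ×ℝ | p.2 ≤ y}).toReal
          * ((ν {p : ℝ×ℝ | p.1 ≤ x}).toReal * (ν {p : ℝ×ℝ | p.2 ≤ y}).toReal) :=
    (integral_prod_mul (indB y) (fun s : (ℝ×ℝ)×(ℝ×ℝ) => indA x s.1 * indB y s.2)).trans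
      (by rw [integral_indB, wAB])
  have v7 : ∫ w : (ℝ×ℝ)×((ℝ×ℝ)×(ℝ×ℝ)),
        indA x w.1 * indB y w.1 * indA x w.2.1 ∂(ν.prod (ν.prod ν))
      = (ν {p : ℝ×ℝ | p.1 ≤ x ∧ p.2 ≤ y}).toReal * (ν {p : ℝ×ℝ | p.1 ≤ x}).toReal :=
    (integral_prod_mul (fun p => indA x p * indB y p)
      (fun s : (ℝ×ℝ)×(ℝ×ℝ) => indA x s.1)).trans (by rw [integral_indAB, wA])
  have v8 : ∫ w : (ℝ×ℝ)×((ℝ×ℝ)×(ℝ×ℝ)),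
        indA x w.1 * (indA x w.2.1 * indB y w.2.2) ∂(ν.prod (ν.prod ν))
      = (ν {p : ℝ×ℝ | p.1 ≤ x}).toReal
          * ((ν {p : ℝ×ℝ | p.1 ≤ x}).toReal * (ν {p : ℝ×ℝ | p.2 ≤ y}).toReal) :=
    (integral_prod_mul (indA x) (fun s : (ℝ×ℝ)×(ℝ×ℝ) => indA x s.1 * indB y s.2)).trans
      (by rw [integral_indA, wAB])
  have v9 : ∫ w : (ℝ×ℝ)×((ℝ×ℝ)×(ℝ×ℝ)),
        indA x w.1 * indB y w.1 * (indA x w.2.1 * indB y w.2.2) ∂(ν.prod (ν.prod ν))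
      = (ν {p : ℝ×ℝ | p.1 ≤ x ∧ p.2 ≤ y}).toReal
          * ((ν {p : ℝ×ℝ | p.1 ≤ x}).toReal * (ν {p : ℝ×ℝ | p.2 ≤ y}).toReal) :=
    (integral_prod_mul (fun p => indA x p * indB y p)
      (fun s : (ℝ×ℝ)×(ℝ×ℝ) => indA x s.1 * indB y s.2)).trans (by rw [integral_indAB, wAB])
  rw [v1, v2, v3, v4, v5, v6, v7, v8, v9]; ring

end Law2
section Meas

lemma measurable_indA_pair : Measurable (fun q : (ℝ×ℝ) × ℝ => indA q.2 q.1) := by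
  unfold indA
  exact Measurable.ite (measurableSet_le measurable_fst.fst measurable_snd)
    measurable_const measurable_const

lemma measurable_indB_pair : Measurable (fun q : (ℝ×ℝ) × ℝ => indB q.2 q.1) := by
  unfold indB
  exact Measurable.ite (measurableSet_le measurable_fst.snd measurable_snd)
    measurable_const measurable_const

lemma indA_diff_sq_le_one (x : ℝ) (p q : ℝ×ℝ) : (indA x p - indA x q)^2 ≤ 1 := by
  unfold indA; split_ifs <;> norm_num

lemma indB_diff_sq_le_one (y : ℝ) (p q : ℝ×ℝ) : (indB y p - indB y q)^2 ≤ 1 := by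
  unfold indB; split_ifs <;> norm_num

end Meas

section Tonelli
variable (ν : Measure (ℝ × ℝ)) [IsProbabilityMeasure ν]

lemma integrable_prodsq (z : ℝ × ℝ) :
    Integrable (fun w : (ℝ×ℝ)×(ℝ×ℝ) =>
      (indA z.1 w.1 - indA z.1 w.2)^2 * (indB z.2 w.1 - indB z.2 w.2)^2) (ν.prod ν) := by
  have hmeas : Measurable (fun w : (ℝ×ℝ)×(ℝ×ℝ) =>
      (indA z.1 w.1 - indA z.1 w.2)^2 * (indB z.2 w.1 - indB z.2 w.2)^2) :=
    ((((measurable_indA z.1).comp measurable_fst).sub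
      ((measurable_indA z.1).comp measurable_snd)).pow_const 2).mul
      ((((measurable_indB z.2).comp measurable_fst).sub
        ((measurable_indB z.2).comp measurable_snd)).pow_const 2)
  refine Integrable.mono' (integrable_const (1:ℝ)) hmeas.aestronglyMeasurable
    (Filter.Eventually.of_forall fun w => ?_)
  rw [Real.norm_eq_abs, abs_mul, abs_of_nonneg (sq_nonneg _), abs_of_nonneg (sq_nonneg _)]
  nlinarith [indA_diff_sq_le_one z.1 w.1 w.2, indB_diff_sq_le_one z.2 w.1 w.2,
    sq_nonneg (indA z.1 w.1 - indA z.1 w.2), sq_nonneg (indB z.2 w.1 - indB z.2 w.2)]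

lemma integrable_prodsq3 (z : ℝ × ℝ) :
    Integrable (fun w : (ℝ×ℝ)×((ℝ×ℝ)×(ℝ×ℝ)) =>
      (indA z.1 w.1 - indA z.1 w.2.1)^2 * (indB z.2 w.1 - indB z.2 w.2.2)^2)
      (ν.prod (ν.prod ν)) := by
  have hmeas : Measurable (fun w : (ℝ×ℝ)×((ℝ×ℝ)×(ℝ×ℝ)) =>
      (indA z.1 w.1 - indA z.1 w.2.1)^2 * (indB z.2 w.1 - indB z.2 w.2.2)^2) :=
    ((((measurable_indA z.1).comp measurable_fst).sub
      ((measurable_indA z.1).comp measurable_snd.fst)).pow_const 2).mul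
      ((((measurable_indB z.2).comp measurable_fst).sub
        ((measurable_indB z.2).comp measurable_snd.snd)).pow_const 2)
  refine Integrable.mono' (integrable_const (1:ℝ)) hmeas.aestronglyMeasurable
    (Filter.Eventually.of_forall fun w => ?_)
  rw [Real.norm_eq_abs, abs_mul, abs_of_nonneg (sq_nonneg _), abs_of_nonneg (sq_nonneg _)]
  nlinarith [indA_diff_sq_le_one z.1 w.1 w.2.1, indB_diff_sq_le_one z.2 w.1 w.2.2,
    sq_nonneg (indA z.1 w.1 - indA z.1 w.2.1), sq_nonneg (indB z.2 w.1 - indB z.2 w.2.2)]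

lemma integrable_sqA (x : ℝ) :
    Integrable (fun w : (ℝ×ℝ)×(ℝ×ℝ) => (indA x w.1 - indA x w.2)^2) (ν.prod ν) := by
  have hmeas : Measurable (fun w : (ℝ×ℝ)×(ℝ×ℝ) => (indA x w.1 - indA x w.2)^2) :=
    (((measurable_indA x).comp measurable_fst).sub
      ((measurable_indA x).comp measurable_snd)).pow_const 2
  refine Integrable.mono' (integrable_const (1:ℝ)) hmeas.aestronglyMeasurable
    (Filter.Eventually.of_forall fun w => ?_)
  rw [Real.norm_eq_abs, abs_of_nonneg (sq_nonneg _)]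
  exact indA_diff_sq_le_one x w.1 w.2

lemma integrable_sqB (y : ℝ) :
    Integrable (fun w : (ℝ×ℝ)×(ℝ×ℝ) => (indB y w.1 - indB y w.2)^2) (ν.prod ν) := by
  have hmeas : Measurable (fun w : (ℝ×ℝ)×(ℝ×ℝ) => (indB y w.1 - indB y w.2)^2) :=
    (((measurable_indB y).comp measurable_fst).sub
      ((measurable_indB y).comp measurable_snd)).pow_const 2
  refine Integrable.mono' (integrable_const (1:ℝ)) hmeas.aestronglyMeasurable
    (Filter.Eventually.of_forall fun w => ?_)
  rw [Real.norm_eq_abs, abs_of_nonneg (sq_nonneg _)]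
  exact indB_diff_sq_le_one y w.1 w.2

lemma M1_eq :
    ∫⁻ w : (ℝ×ℝ)×(ℝ×ℝ), ENNReal.ofReal (|w.1.1 - w.2.1| * |w.1.2 - w.2.2|) ∂(ν.prod ν)
      = ∫⁻ z : ℝ×ℝ, ENNReal.ofReal (∫ w : (ℝ×ℝ)×(ℝ×ℝ),
          (indA z.1 w.1 - indA z.1 w.2)^2 * (indB z.2 w.1 - indB z.2 w.2)^2 ∂(ν.prod ν))
          ∂volume := by
  have hF : ∀ w : (ℝ×ℝ)×(ℝ×ℝ), ENNReal.ofReal (|w.1.1 - w.2.1| * |w.1.2 - w.2.2|)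
      = ∫⁻ z : ℝ×ℝ, ENNReal.ofReal ((indA z.1 w.1 - indA z.1 w.2)^2)
          * ENNReal.ofReal ((indB z.2 w.1 - indB z.2 w.2)^2) ∂volume := by
    intro w
    have h1 : AEMeasurable (fun u : ℝ =>
        ENNReal.ofReal (((if w.1.1 ≤ u then (1:ℝ) else 0) - (if w.2.1 ≤ u then 1 else 0))^2))
        volume := by
      refine Measurable.aemeasurable (Measurable.ennreal_ofReal (Measurable.pow_const ?_ 2))
      exact (Measurable.ite (measurableSet_le measurable_const measurable_id)
        measurable_const measurable_const).sub
        (Measurable.ite (measurableSet_le measurable_const measurable_id)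
        measurable_const measurable_const)
    have h2 : AEMeasurable (fun u : ℝ =>
        ENNReal.ofReal (((if w.1.2 ≤ u then (1:ℝ) else 0) - (if w.2.2 ≤ u then 1 else 0))^2))
        volume := by
      refine Measurable.aemeasurable (Measurable.ennreal_ofReal (Measurable.pow_const ?_ 2))
      exact (Measurable.ite (measurableSet_le measurable_const measurable_id)
        measurable_const measurable_const).sub
        (Measurable.ite (measurableSet_le measurable_const measurable_id)
        measurable_const measurable_const)
    rw [ENNReal.ofReal_mul (abs_nonneg _), ← lintegral_e w.1.1 w.2.1,
      ← lintegral_e w.1.2 w.2.2, ← lintegral_prod_mul h1 h2, ← Measure.volume_eq_prod]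
    rfl
  simp_rw [hF]
  have hunc : AEMeasurable (Function.uncurry fun (w : (ℝ×ℝ)×(ℝ×ℝ)) (z : ℝ×ℝ) =>
      ENNReal.ofReal ((indA z.1 w.1 - indA z.1 w.2)^2)
        * ENNReal.ofReal ((indB z.2 w.1 - indB z.2 w.2)^2)) ((ν.prod ν).prod volume) := by
    refine Measurable.aemeasurable ?_
    have a1 : Measurable (fun v : ((ℝ×ℝ)×(ℝ×ℝ)) × (ℝ×ℝ) => indA v.2.1 v.1.1) :=
      measurable_indA_pair.comp ((measurable_fst.fst).prodMk (measurable_snd.fst))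
    have a2 : Measurable (fun v : ((ℝ×ℝ)×(ℝ×ℝ)) × (ℝ×ℝ) => indA v.2.1 v.1.2) :=
      measurable_indA_pair.comp ((measurable_fst.snd).prodMk (measurable_snd.fst))
    have b1 : Measurable (fun v : ((ℝ×ℝ)×(ℝ×ℝ)) × (ℝ×ℝ) => indB v.2.2 v.1.1) :=
      measurable_indB_pair.comp ((measurable_fst.fst).prodMk (measurable_snd.snd))
    have b2 : Measurable (fun v : ((ℝ×ℝ)×(ℝ×ℝ)) × (ℝ×ℝ) => indB v.2.2 v.1.2) :=
      measurable_indB_pair.comp ((measurable_fst.snd).prodMk (measurable_snd.snd))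
    exact (((a1.sub a2).pow_const 2).ennreal_ofReal).mul
      (((b1.sub b2).pow_const 2).ennreal_ofReal)
  rw [lintegral_lintegral_swap hunc]
  refine lintegral_congr fun z => ?_
  calc ∫⁻ w : (ℝ×ℝ)×(ℝ×ℝ), ENNReal.ofReal ((indA z.1 w.1 - indA z.1 w.2)^2)
          * ENNReal.ofReal ((indB z.2 w.1 - indB z.2 w.2)^2) ∂(ν.prod ν)
      = ∫⁻ w : (ℝ×ℝ)×(ℝ×ℝ), ENNReal.ofReal ((indA z.1 w.1 - indA z.1 w.2)^2
          * (indB z.2 w.1 - indB z.2 w.2)^2) ∂(ν.prod ν) :=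
        lintegral_congr fun w => (ENNReal.ofReal_mul (sq_nonneg _)).symm
    _ = ENNReal.ofReal (∫ w : (ℝ×ℝ)×(ℝ×ℝ), (indA z.1 w.1 - indA z.1 w.2)^2
          * (indB z.2 w.1 - indB z.2 w.2)^2 ∂(ν.prod ν)) :=
        (ofReal_integral_eq_lintegral_ofReal (integrable_prodsq ν z)
          (Filter.Eventually.of_forall fun w =>
            mul_nonneg (sq_nonneg _) (sq_nonneg _))).symm

lemma M4_eq :
    ∫⁻ w : (ℝ×ℝ)×((ℝ×ℝ)×(ℝ×ℝ)),
        ENNReal.ofReal (|w.1.1 - w.2.1.1| * |w.1.2 - w.2.2.2|) ∂(ν.prod (ν.prod ν))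
      = ∫⁻ z : ℝ×ℝ, ENNReal.ofReal (∫ w : (ℝ×ℝ)×((ℝ×ℝ)×(ℝ×ℝ)),
          (indA z.1 w.1 - indA z.1 w.2.1)^2 * (indB z.2 w.1 - indB z.2 w.2.2)^2
          ∂(ν.prod (ν.prod ν))) ∂volume := by
  have hF : ∀ w : (ℝ×ℝ)×((ℝ×ℝ)×(ℝ×ℝ)),
      ENNReal.ofReal (|w.1.1 - w.2.1.1| * |w.1.2 - w.2.2.2|)
      = ∫⁻ z : ℝ×ℝ, ENNReal.ofReal ((indA z.1 w.1 - indA z.1 w.2.1)^2)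
          * ENNReal.ofReal ((indB z.2 w.1 - indB z.2 w.2.2)^2) ∂volume := by
    intro w
    have h1 : AEMeasurable (fun u : ℝ =>
        ENNReal.ofReal (((if w.1.1 ≤ u then (1:ℝ) else 0) - (if w.2.1.1 ≤ u then 1 else 0))^2))
        volume := by
      refine Measurable.aemeasurable (Measurable.ennreal_ofReal (Measurable.pow_const ?_ 2))
      exact (Measurable.ite (measurableSet_le measurable_const measurable_id)
        measurable_const measurable_const).sub
        (Measurable.ite (measurableSet_le measurable_const measurable_id)
        measurable_const measurable_const)
    have h2 : AEMeasurable (fun u : ℝ =>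
        ENNReal.ofReal (((if w.1.2 ≤ u then (1:ℝ) else 0) - (if w.2.2.2 ≤ u then 1 else 0))^2))
        volume := by
      refine Measurable.aemeasurable (Measurable.ennreal_ofReal (Measurable.pow_const ?_ 2))
      exact (Measurable.ite (measurableSet_le measurable_const measurable_id)
        measurable_const measurable_const).sub
        (Measurable.ite (measurableSet_le measurable_const measurable_id)
        measurable_const measurable_const)
    rw [ENNReal.ofReal_mul (abs_nonneg _), ← lintegral_e w.1.1 w.2.1.1,
      ← lintegral_e w.1.2 w.2.2.2, ← lintegral_prod_mul h1 h2, ← Measure.volume_eq_prod]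
    rfl
  simp_rw [hF]
  have hunc : AEMeasurable (Function.uncurry fun (w : (ℝ×ℝ)×((ℝ×ℝ)×(ℝ×ℝ))) (z : ℝ×ℝ) =>
      ENNReal.ofReal ((indA z.1 w.1 - indA z.1 w.2.1)^2)
        * ENNReal.ofReal ((indB z.2 w.1 - indB z.2 w.2.2)^2))
      ((ν.prod (ν.prod ν)).prod volume) := by
    refine Measurable.aemeasurable ?_
    have a1 : Measurable (fun v : ((ℝ×ℝ)×((ℝ×ℝ)×(ℝ×ℝ))) × (ℝ×ℝ) => indA v.2.1 v.1.1) :=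
      measurable_indA_pair.comp ((measurable_fst.fst).prodMk (measurable_snd.fst))
    have a2 : Measurable (fun v : ((ℝ×ℝ)×((ℝ×ℝ)×(ℝ×ℝ))) × (ℝ×ℝ) => indA v.2.1 v.1.2.1) :=
      measurable_indA_pair.comp ((measurable_fst.snd.fst).prodMk (measurable_snd.fst))
    have b1 : Measurable (fun v : ((ℝ×ℝ)×((ℝ×ℝ)×(ℝ×ℝ))) × (ℝ×ℝ) => indB v.2.2 v.1.1) :=
      measurable_indB_pair.comp ((measurable_fst.fst).prodMk (measurable_snd.snd))
    have b2 : Measurable (fun v : ((ℝ×ℝ)×((ℝ×ℝ)×(ℝ×ℝ))) × (ℝ×ℝ) => indB v.2.2 v.1.2.2) :=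
      measurable_indB_pair.comp ((measurable_fst.snd.snd).prodMk (measurable_snd.snd))
    exact (((a1.sub a2).pow_const 2).ennreal_ofReal).mul
      (((b1.sub b2).pow_const 2).ennreal_ofReal)
  rw [lintegral_lintegral_swap hunc]
  refine lintegral_congr fun z => ?_
  calc ∫⁻ w : (ℝ×ℝ)×((ℝ×ℝ)×(ℝ×ℝ)), ENNReal.ofReal ((indA z.1 w.1 - indA z.1 w.2.1)^2)
          * ENNReal.ofReal ((indB z.2 w.1 - indB z.2 w.2.2)^2) ∂(ν.prod (ν.prod ν))
      = ∫⁻ w : (ℝ×ℝ)×((ℝ×ℝ)×(ℝ×ℝ)), ENNReal.ofReal ((indA z.1 w.1 - indA z.1 w.2.1)^2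
          * (indB z.2 w.1 - indB z.2 w.2.2)^2) ∂(ν.prod (ν.prod ν)) :=
        lintegral_congr fun w => (ENNReal.ofReal_mul (sq_nonneg _)).symm
    _ = ENNReal.ofReal (∫ w : (ℝ×ℝ)×((ℝ×ℝ)×(ℝ×ℝ)), (indA z.1 w.1 - indA z.1 w.2.1)^2
          * (indB z.2 w.1 - indB z.2 w.2.2)^2 ∂(ν.prod (ν.prod ν))) :=
        (ofReal_integral_eq_lintegral_ofReal (integrable_prodsq3 ν z)
          (Filter.Eventually.of_forall fun w =>
            mul_nonneg (sq_nonneg _) (sq_nonneg _))).symm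

lemma M2A_eq :
    ∫⁻ w : (ℝ×ℝ)×(ℝ×ℝ), ENNReal.ofReal |w.1.1 - w.2.1| ∂(ν.prod ν)
      = ∫⁻ x : ℝ, ENNReal.ofReal (∫ w : (ℝ×ℝ)×(ℝ×ℝ),
          (indA x w.1 - indA x w.2)^2 ∂(ν.prod ν)) ∂volume := by
  have hF : ∀ w : (ℝ×ℝ)×(ℝ×ℝ), ENNReal.ofReal |w.1.1 - w.2.1|
      = ∫⁻ x : ℝ, ENNReal.ofReal ((indA x w.1 - indA x w.2)^2) ∂volume :=
    fun w => (lintegral_e w.1.1 w.2.1).symm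
  simp_rw [hF]
  have hunc : AEMeasurable (Function.uncurry fun (w : (ℝ×ℝ)×(ℝ×ℝ)) (x : ℝ) =>
      ENNReal.ofReal ((indA x w.1 - indA x w.2)^2)) ((ν.prod ν).prod volume) := by
    refine Measurable.aemeasurable ?_
    have a1 : Measurable (fun v : ((ℝ×ℝ)×(ℝ×ℝ)) × ℝ => indA v.2 v.1.1) :=
      measurable_indA_pair.comp ((measurable_fst.fst).prodMk measurable_snd)
    have a2 : Measurable (fun v : ((ℝ×ℝ)×(ℝ×ℝ)) × ℝ => indA v.2 v.1.2) :=
      measurable_indA_pair.comp ((measurable_fst.snd).prodMk measurable_snd)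
    exact ((a1.sub a2).pow_const 2).ennreal_ofReal
  rw [lintegral_lintegral_swap hunc]
  refine lintegral_congr fun x => ?_
  exact (ofReal_integral_eq_lintegral_ofReal (integrable_sqA ν x)
    (Filter.Eventually.of_forall fun w => sq_nonneg _)).symm

lemma M2B_eq :
    ∫⁻ w : (ℝ×ℝ)×(ℝ×ℝ), ENNReal.ofReal |w.1.2 - w.2.2| ∂(ν.prod ν)
      = ∫⁻ y : ℝ, ENNReal.ofReal (∫ w : (ℝ×ℝ)×(ℝ×ℝ),
          (indB y w.1 - indB y w.2)^2 ∂(ν.prod ν)) ∂volume := by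
  have hF : ∀ w : (ℝ×ℝ)×(ℝ×ℝ), ENNReal.ofReal |w.1.2 - w.2.2|
      = ∫⁻ y : ℝ, ENNReal.ofReal ((indB y w.1 - indB y w.2)^2) ∂volume :=
    fun w => (lintegral_e w.1.2 w.2.2).symm
  simp_rw [hF]
  have hunc : AEMeasurable (Function.uncurry fun (w : (ℝ×ℝ)×(ℝ×ℝ)) (y : ℝ) =>
      ENNReal.ofReal ((indB y w.1 - indB y w.2)^2)) ((ν.prod ν).prod volume) := by
    refine Measurable.aemeasurable ?_
    have b1 : Measurable (fun v : ((ℝ×ℝ)×(ℝ×ℝ)) × ℝ => indB v.2 v.1.1) :=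
      measurable_indB_pair.comp ((measurable_fst.fst).prodMk measurable_snd)
    have b2 : Measurable (fun v : ((ℝ×ℝ)×(ℝ×ℝ)) × ℝ => indB v.2 v.1.2) :=
      measurable_indB_pair.comp ((measurable_fst.snd).prodMk measurable_snd)
    exact ((b1.sub b2).pow_const 2).ennreal_ofReal
  rw [lintegral_lintegral_swap hunc]
  refine lintegral_congr fun y => ?_
  exact (ofReal_integral_eq_lintegral_ofReal (integrable_sqB ν y)
    (Filter.Eventually.of_forall fun w => sq_nonneg _)).symm

end Tonelli
noncomputable def dcP (ν : Measure (ℝ×ℝ)) (x : ℝ) : ℝ := (ν {p : ℝ×ℝ | p.1 ≤ x}).toReal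
noncomputable def dcQ (ν : Measure (ℝ×ℝ)) (y : ℝ) : ℝ := (ν {p : ℝ×ℝ | p.2 ≤ y}).toReal
noncomputable def dcR (ν : Measure (ℝ×ℝ)) (x y : ℝ) : ℝ :=
  (ν {p : ℝ×ℝ | p.1 ≤ x ∧ p.2 ≤ y}).toReal

noncomputable def e1v (ν : Measure (ℝ×ℝ)) (z : ℝ×ℝ) : ℝ :=
  2*dcR ν z.1 z.2 + 2*(dcP ν z.1 * dcQ ν z.2) - 4*(dcR ν z.1 z.2 * dcQ ν z.2)
    - 4*(dcR ν z.1 z.2 * dcP ν z.1) + 4*(dcR ν z.1 z.2 * dcR ν z.1 z.2)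

noncomputable def e2Av (ν : Measure (ℝ×ℝ)) (x : ℝ) : ℝ := 2*dcP ν x - 2*(dcP ν x * dcP ν x)
noncomputable def e2Bv (ν : Measure (ℝ×ℝ)) (y : ℝ) : ℝ := 2*dcQ ν y - 2*(dcQ ν y * dcQ ν y)

noncomputable def e3v (ν : Measure (ℝ×ℝ)) (z : ℝ×ℝ) : ℝ :=
  dcR ν z.1 z.2 + 3*(dcP ν z.1 * dcQ ν z.2) - 2*(dcR ν z.1 z.2 * dcQ ν z.2)
    - 2*(dcP ν z.1 * dcQ ν z.2 * dcQ ν z.2) - 2*(dcR ν z.1 z.2 * dcP ν z.1)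
    - 2*(dcP ν z.1 * dcP ν z.1 * dcQ ν z.2) + 4*(dcR ν z.1 z.2 * dcP ν z.1 * dcQ ν z.2)

noncomputable def e0v (ν : Measure (ℝ×ℝ)) (z : ℝ×ℝ) : ℝ :=
  4*(dcR ν z.1 z.2 - dcP ν z.1 * dcQ ν z.2)^2

lemma comb_pt (ν : Measure (ℝ×ℝ)) (z : ℝ×ℝ) :
    e1v ν z + e2Av ν z.1 * e2Bv ν z.2 - 2 * e3v ν z = e0v ν z := by
  unfold e1v e2Av e2Bv e3v e0v; ring

section Law3
variable (ν : Measure (ℝ × ℝ)) [IsProbabilityMeasure ν]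

lemma E1v_eq (z : ℝ×ℝ) :
    ∫ w : (ℝ×ℝ)×(ℝ×ℝ), (indA z.1 w.1 - indA z.1 w.2)^2 * (indB z.2 w.1 - indB z.2 w.2)^2
      ∂(ν.prod ν) = e1v ν z := E1_eq ν z.1 z.2

lemma E2Av_eq (x : ℝ) :
    ∫ w : (ℝ×ℝ)×(ℝ×ℝ), (indA x w.1 - indA x w.2)^2 ∂(ν.prod ν) = e2Av ν x := E2A_eq ν x

lemma E2Bv_eq (y : ℝ) :
    ∫ w : (ℝ×ℝ)×(ℝ×ℝ), (indB y w.1 - indB y w.2)^2 ∂(ν.prod ν) = e2Bv ν y := E2B_eq ν y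

lemma E3v_eq (z : ℝ×ℝ) :
    ∫ w : (ℝ×ℝ)×((ℝ×ℝ)×(ℝ×ℝ)),
        (indA z.1 w.1 - indA z.1 w.2.1)^2 * (indB z.2 w.1 - indB z.2 w.2.2)^2
        ∂(ν.prod (ν.prod ν)) = e3v ν z := E3_eq ν z.1 z.2

lemma e1v_nonneg (z : ℝ×ℝ) : 0 ≤ e1v ν z := by
  rw [← E1v_eq ν z]
  exact integral_nonneg fun w => mul_nonneg (sq_nonneg _) (sq_nonneg _)

lemma e2Av_nonneg (x : ℝ) : 0 ≤ e2Av ν x := by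
  rw [← E2Av_eq ν x]; exact integral_nonneg fun w => sq_nonneg _

lemma e2Bv_nonneg (y : ℝ) : 0 ≤ e2Bv ν y := by
  rw [← E2Bv_eq ν y]; exact integral_nonneg fun w => sq_nonneg _

lemma e3v_nonneg (z : ℝ×ℝ) : 0 ≤ e3v ν z := by
  rw [← E3v_eq ν z]
  exact integral_nonneg fun w => mul_nonneg (sq_nonneg _) (sq_nonneg _)

lemma measurable_dcP : Measurable (dcP ν) := by
  apply Monotone.measurable
  intro a b hab
  exact ENNReal.toReal_mono (measure_ne_top _ _)
    (measure_mono fun p hp => le_trans hp hab)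

lemma measurable_dcQ : Measurable (dcQ ν) := by
  apply Monotone.measurable
  intro a b hab
  exact ENNReal.toReal_mono (measure_ne_top _ _)
    (measure_mono fun p hp => le_trans hp hab)

lemma measurable_dcRz : Measurable (fun z : ℝ×ℝ => dcR ν z.1 z.2) := by
  have heq : (fun z : ℝ×ℝ => dcR ν z.1 z.2)
      = fun z : ℝ×ℝ => ∫ p, indA z.1 p * indB z.2 p ∂ν := by
    funext z
    exact (integral_indAB z.1 z.2).symm
  rw [heq]
  have hsm : StronglyMeasurable (fun v : (ℝ×ℝ) × (ℝ×ℝ) => indA v.1.1 v.2 * indB v.1.2 v.2) :=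
    ((measurable_indA_pair.comp (measurable_snd.prodMk measurable_fst.fst)).mul
      (measurable_indB_pair.comp (measurable_snd.prodMk measurable_fst.snd))).stronglyMeasurable
  exact hsm.integral_prod_right'.measurable

lemma measurable_e1v : Measurable (e1v ν) := by
  unfold e1v
  exact ((((((measurable_dcRz ν).const_mul 2).add
    ((((measurable_dcP ν).comp measurable_fst).mul
      ((measurable_dcQ ν).comp measurable_snd)).const_mul 2)).sub
    (((measurable_dcRz ν).mul ((measurable_dcQ ν).comp measurable_snd)).const_mul 4)).sub
    (((measurable_dcRz ν).mul ((measurable_dcP ν).comp measurable_fst)).const_mul 4)).add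
    (((measurable_dcRz ν).mul (measurable_dcRz ν)).const_mul 4))

lemma measurable_e2Av : Measurable (e2Av ν) := by
  unfold e2Av
  exact ((measurable_dcP ν).const_mul 2).sub
    (((measurable_dcP ν).mul (measurable_dcP ν)).const_mul 2)

lemma measurable_e2Bv : Measurable (e2Bv ν) := by
  unfold e2Bv
  exact ((measurable_dcQ ν).const_mul 2).sub
    (((measurable_dcQ ν).mul (measurable_dcQ ν)).const_mul 2)

lemma measurable_e3v : Measurable (e3v ν) := by
  unfold e3v
  have hP : Measurable (fun z : ℝ×ℝ => dcP ν z.1) := (measurable_dcP ν).comp measurable_fst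
  have hQ : Measurable (fun z : ℝ×ℝ => dcQ ν z.2) := (measurable_dcQ ν).comp measurable_snd
  have hR := measurable_dcRz ν
  exact ((((((hR.add ((hP.mul hQ).const_mul 3)).sub ((hR.mul hQ).const_mul 2)).sub
    (((hP.mul hQ).mul hQ).const_mul 2)).sub ((hR.mul hP).const_mul 2)).sub
    (((hP.mul hP).mul hQ).const_mul 2)).add (((hR.mul hP).mul hQ).const_mul 4))

lemma measurable_e0v : Measurable (e0v ν) := by
  unfold e0v
  have hP : Measurable (fun z : ℝ×ℝ => dcP ν z.1) := (measurable_dcP ν).comp measurable_fst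
  have hQ : Measurable (fun z : ℝ×ℝ => dcQ ν z.2) := (measurable_dcQ ν).comp measurable_snd
  exact (((measurable_dcRz ν).sub (hP.mul hQ)).pow_const 2).const_mul 4

end Law3

lemma transfer {α β : Type*} [MeasurableSpace α] [MeasurableSpace β]
    {m : Measure α} {mv : Measure β} {G : α → ℝ} {g : β → ℝ}
    (hGi : Integrable G m) (hGnn : ∀ w, 0 ≤ G w) (hg : Measurable g) (hgnn : ∀ z, 0 ≤ g z)
    (hM : ∫⁻ w, ENNReal.ofReal (G w) ∂m = ∫⁻ z, ENNReal.ofReal (g z) ∂mv) :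
    (∫ w, G w ∂m = ∫ z, g z ∂mv) ∧ Integrable g mv := by
  have h1 : ENNReal.ofReal (∫ w, G w ∂m) = ∫⁻ w, ENNReal.ofReal (G w) ∂m :=
    ofReal_integral_eq_lintegral_ofReal hGi (Filter.Eventually.of_forall hGnn)
  have hfin : ∫⁻ z, ENNReal.ofReal (g z) ∂mv ≠ ⊤ := by
    rw [← hM, ← h1]; exact ENNReal.ofReal_ne_top
  have hgi : Integrable g mv := by
    refine ⟨hg.aestronglyMeasurable, ?_⟩
    exact (hasFiniteIntegral_iff_ofReal (Filter.Eventually.of_forall hgnn)).mpr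
      (lt_top_iff_ne_top.mpr hfin)
  have h2 : ENNReal.ofReal (∫ z, g z ∂mv) = ∫⁻ z, ENNReal.ofReal (g z) ∂mv :=
    ofReal_integral_eq_lintegral_ofReal hgi (Filter.Eventually.of_forall hgnn)
  refine ⟨?_, hgi⟩
  have h3 := h1.trans (hM.trans h2.symm)
  exact (ENNReal.ofReal_eq_ofReal_iff (integral_nonneg hGnn) (integral_nonneg hgnn)).mp h3
section LawIdentity
variable (ν : Measure (ℝ × ℝ)) [IsProbabilityMeasure ν]

lemma law_identity
    (Int1 : Integrable (fun w : (ℝ×ℝ)×(ℝ×ℝ) => |w.1.1 - w.2.1| * |w.1.2 - w.2.2|) (ν.prod ν))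
    (Int2A : Integrable (fun w : (ℝ×ℝ)×(ℝ×ℝ) => |w.1.1 - w.2.1|) (ν.prod ν))
    (Int2B : Integrable (fun w : (ℝ×ℝ)×(ℝ×ℝ) => |w.1.2 - w.2.2|) (ν.prod ν))
    (Int4 : Integrable (fun w : (ℝ×ℝ)×((ℝ×ℝ)×(ℝ×ℝ)) =>
      |w.1.1 - w.2.1.1| * |w.1.2 - w.2.2.2|) (ν.prod (ν.prod ν))) :
    ((∫ w : (ℝ×ℝ)×(ℝ×ℝ), |w.1.1 - w.2.1| * |w.1.2 - w.2.2| ∂(ν.prod ν))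
      + (∫ w : (ℝ×ℝ)×(ℝ×ℝ), |w.1.1 - w.2.1| ∂(ν.prod ν))
        * (∫ w : (ℝ×ℝ)×(ℝ×ℝ), |w.1.2 - w.2.2| ∂(ν.prod ν))
      - 2 * ∫ w : (ℝ×ℝ)×((ℝ×ℝ)×(ℝ×ℝ)),
          |w.1.1 - w.2.1.1| * |w.1.2 - w.2.2.2| ∂(ν.prod (ν.prod ν)))
      = ∫ z : ℝ×ℝ, e0v ν z ∂volume
    ∧ Integrable (e0v ν) volume := by
  have hM1 : ∫⁻ w : (ℝ×ℝ)×(ℝ×ℝ),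
      ENNReal.ofReal (|w.1.1 - w.2.1| * |w.1.2 - w.2.2|) ∂(ν.prod ν)
      = ∫⁻ z : ℝ×ℝ, ENNReal.ofReal (e1v ν z) ∂volume :=
    (M1_eq ν).trans (lintegral_congr fun z => by rw [E1v_eq])
  obtain ⟨hJ1, hi1⟩ := transfer Int1 (fun w => mul_nonneg (abs_nonneg _) (abs_nonneg _))
    (measurable_e1v ν) (e1v_nonneg ν) hM1
  have hM2A : ∫⁻ w : (ℝ×ℝ)×(ℝ×ℝ), ENNReal.ofReal |w.1.1 - w.2.1| ∂(ν.prod ν)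
      = ∫⁻ x : ℝ, ENNReal.ofReal (e2Av ν x) ∂volume :=
    (M2A_eq ν).trans (lintegral_congr fun x => by rw [E2Av_eq])
  obtain ⟨hJ2A, hi2A⟩ := transfer Int2A (fun w => abs_nonneg _)
    (measurable_e2Av ν) (e2Av_nonneg ν) hM2A
  have hM2B : ∫⁻ w : (ℝ×ℝ)×(ℝ×ℝ), ENNReal.ofReal |w.1.2 - w.2.2| ∂(ν.prod ν)
      = ∫⁻ y : ℝ, ENNReal.ofReal (e2Bv ν y) ∂volume :=
    (M2B_eq ν).trans (lintegral_congr fun y => by rw [E2Bv_eq])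
  obtain ⟨hJ2B, hi2B⟩ := transfer Int2B (fun w => abs_nonneg _)
    (measurable_e2Bv ν) (e2Bv_nonneg ν) hM2B
  have hM4 : ∫⁻ w : (ℝ×ℝ)×((ℝ×ℝ)×(ℝ×ℝ)),
      ENNReal.ofReal (|w.1.1 - w.2.1.1| * |w.1.2 - w.2.2.2|) ∂(ν.prod (ν.prod ν))
      = ∫⁻ z : ℝ×ℝ, ENNReal.ofReal (e3v ν z) ∂volume :=
    (M4_eq ν).trans (lintegral_congr fun z => by rw [E3v_eq])
  obtain ⟨hJ4, hi3⟩ := transfer Int4 (fun w => mul_nonneg (abs_nonneg _) (abs_nonneg _))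
    (measurable_e3v ν) (e3v_nonneg ν) hM4
  have hip : Integrable (fun z : ℝ×ℝ => e2Av ν z.1 * e2Bv ν z.2) volume := by
    have h := hi2A.mul_prod hi2B
    rwa [← Measure.volume_eq_prod] at h
  have hprod : (∫ x : ℝ, e2Av ν x ∂volume) * (∫ y : ℝ, e2Bv ν y ∂volume)
      = ∫ z : ℝ×ℝ, e2Av ν z.1 * e2Bv ν z.2 ∂volume := by
    have h := (integral_prod_mul (μ := (volume : Measure ℝ)) (ν := (volume : Measure ℝ))
      (e2Av ν) (e2Bv ν)).symm
    rwa [← Measure.volume_eq_prod] at h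
  have hsum : Integrable (fun z : ℝ×ℝ => e1v ν z + e2Av ν z.1 * e2Bv ν z.2) volume :=
    hi1.add hip
  have hie0 : Integrable (e0v ν) volume :=
    (hsum.sub (hi3.const_mul 2)).congr (Filter.Eventually.of_forall (comb_pt ν))
  refine ⟨?_, hie0⟩
  rw [hJ1, hJ2A, hJ2B, hJ4, hprod, ← integral_add hi1 hip, ← integral_const_mul,
    ← integral_sub hsum (hi3.const_mul 2)]
  exact integral_congr_ae (Filter.Eventually.of_forall (comb_pt ν))

end LawIdentity
section Cont
variable (ν : Measure (ℝ × ℝ)) [IsProbabilityMeasure ν]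

lemma dcP_nonneg (x : ℝ) : 0 ≤ dcP ν x := ENNReal.toReal_nonneg
lemma dcQ_nonneg (y : ℝ) : 0 ≤ dcQ ν y := ENNReal.toReal_nonneg
lemma dcR_nonneg (x y : ℝ) : 0 ≤ dcR ν x y := ENNReal.toReal_nonneg

lemma dcP_le_one (x : ℝ) : dcP ν x ≤ 1 := by
  have := ENNReal.toReal_mono (by simp) (prob_le_one (μ := ν) (s := {p : ℝ×ℝ | p.1 ≤ x}))
  simpa [dcP] using this

lemma dcQ_le_one (y : ℝ) : dcQ ν y ≤ 1 := by
  have := ENNReal.toReal_mono (by simp) (prob_le_one (μ := ν) (s := {p : ℝ×ℝ | p.2 ≤ y}))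
  simpa [dcQ] using this

lemma dcP_mono {a b : ℝ} (hab : a ≤ b) : dcP ν a ≤ dcP ν b :=
  ENNReal.toReal_mono (measure_ne_top _ _) (measure_mono fun p hp => le_trans hp hab)

lemma dcQ_mono {a b : ℝ} (hab : a ≤ b) : dcQ ν a ≤ dcQ ν b :=
  ENNReal.toReal_mono (measure_ne_top _ _) (measure_mono fun p hp => le_trans hp hab)

lemma dcR_mono {a b a' b' : ℝ} (ha : a ≤ a') (hb : b ≤ b') : dcR ν a b ≤ dcR ν a' b' :=
  ENNReal.toReal_mono (measure_ne_top _ _)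
    (measure_mono fun p hp => ⟨le_trans hp.1 ha, le_trans hp.2 hb⟩)

lemma tendsto_dcR (x y : ℝ) :
    Filter.Tendsto (fun n : ℕ => dcR ν (x + 1/((n:ℝ)+1)) (y + 1/((n:ℝ)+1)))
      Filter.atTop (nhds (dcR ν x y)) := by
  set s : ℕ → Set (ℝ×ℝ) := fun n => {p : ℝ×ℝ | p.1 ≤ x + 1/((n:ℝ)+1) ∧ p.2 ≤ y + 1/((n:ℝ)+1)}
    with hs
  have hmeas : ∀ n, MeasurableSet (s n) := fun n => measurableSet_AB _ _
  have hanti : Antitone s := by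
    intro n m hnm p hp
    have hle : 1/((m:ℝ)+1) ≤ 1/((n:ℝ)+1) := by
      apply one_div_le_one_div_of_le (by positivity)
      exact_mod_cast add_le_add_left (Nat.cast_le.mpr hnm) 1
    have hp' : p.1 ≤ x + 1/((m:ℝ)+1) ∧ p.2 ≤ y + 1/((m:ℝ)+1) := hp
    show p.1 ≤ x + 1/((n:ℝ)+1) ∧ p.2 ≤ y + 1/((n:ℝ)+1)
    exact ⟨by linarith [hp'.1], by linarith [hp'.2]⟩
  have hiInter : ⋂ n, s n = {p : ℝ×ℝ | p.1 ≤ x ∧ p.2 ≤ y} := by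
    ext p
    simp only [Set.mem_iInter, hs, Set.mem_setOf_eq]
    constructor
    · intro hp
      constructor
      · refine le_of_forall_pos_le_add fun ε hε => ?_
        obtain ⟨n, hn⟩ := exists_nat_one_div_lt hε
        exact (hp n).1.trans (by linarith)
      · refine le_of_forall_pos_le_add fun ε hε => ?_
        obtain ⟨n, hn⟩ := exists_nat_one_div_lt hε
        exact (hp n).2.trans (by linarith)
    · intro hp n
      have : (0:ℝ) < 1/((n:ℝ)+1) := by positivity
      exact ⟨hp.1.trans (by linarith), hp.2.trans (by linarith)⟩
  have h1 := tendsto_measure_iInter_atTop (μ := ν)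
    (fun n => (hmeas n).nullMeasurableSet) hanti ⟨0, measure_ne_top _ _⟩
  rw [hiInter] at h1
  exact (ENNReal.tendsto_toReal (measure_ne_top _ _)).comp h1

lemma tendsto_dcP (x : ℝ) :
    Filter.Tendsto (fun n : ℕ => dcP ν (x + 1/((n:ℝ)+1))) Filter.atTop (nhds (dcP ν x)) := by
  set s : ℕ → Set (ℝ×ℝ) := fun n => {p : ℝ×ℝ | p.1 ≤ x + 1/((n:ℝ)+1)} with hs
  have hmeas : ∀ n, MeasurableSet (s n) := fun n => measurableSet_A _
  have hanti : Antitone s := by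
    intro n m hnm p hp
    have hle : 1/((m:ℝ)+1) ≤ 1/((n:ℝ)+1) := by
      apply one_div_le_one_div_of_le (by positivity)
      exact_mod_cast add_le_add_left (Nat.cast_le.mpr hnm) 1
    have hp' : p.1 ≤ x + 1/((m:ℝ)+1) := hp
    show p.1 ≤ x + 1/((n:ℝ)+1)
    linarith
  have hiInter : ⋂ n, s n = {p : ℝ×ℝ | p.1 ≤ x} := by
    ext p
    simp only [Set.mem_iInter, hs, Set.mem_setOf_eq]
    constructor
    · intro hp
      refine le_of_forall_pos_le_add fun ε hε => ?_
      obtain ⟨n, hn⟩ := exists_nat_one_div_lt hε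
      exact (hp n).trans (by linarith)
    · intro hp n
      have : (0:ℝ) < 1/((n:ℝ)+1) := by positivity
      exact hp.trans (by linarith)
  have h1 := tendsto_measure_iInter_atTop (μ := ν)
    (fun n => (hmeas n).nullMeasurableSet) hanti ⟨0, measure_ne_top _ _⟩
  rw [hiInter] at h1
  exact (ENNReal.tendsto_toReal (measure_ne_top _ _)).comp h1

lemma tendsto_dcQ (y : ℝ) :
    Filter.Tendsto (fun n : ℕ => dcQ ν (y + 1/((n:ℝ)+1))) Filter.atTop (nhds (dcQ ν y)) := by
  set s : ℕ → Set (ℝ×ℝ) := fun n => {p : ℝ×ℝ | p.2 ≤ y + 1/((n:ℝ)+1)} with hs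
  have hmeas : ∀ n, MeasurableSet (s n) := fun n => measurableSet_B _
  have hanti : Antitone s := by
    intro n m hnm p hp
    have hle : 1/((m:ℝ)+1) ≤ 1/((n:ℝ)+1) := by
      apply one_div_le_one_div_of_le (by positivity)
      exact_mod_cast add_le_add_left (Nat.cast_le.mpr hnm) 1
    have hp' : p.2 ≤ y + 1/((m:ℝ)+1) := hp
    show p.2 ≤ y + 1/((n:ℝ)+1)
    linarith
  have hiInter : ⋂ n, s n = {p : ℝ×ℝ | p.2 ≤ y} := by
    ext p
    simp only [Set.mem_iInter, hs, Set.mem_setOf_eq]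
    constructor
    · intro hp
      refine le_of_forall_pos_le_add fun ε hε => ?_
      obtain ⟨n, hn⟩ := exists_nat_one_div_lt hε
      exact (hp n).trans (by linarith)
    · intro hp n
      have : (0:ℝ) < 1/((n:ℝ)+1) := by positivity
      exact hp.trans (by linarith)
  have h1 := tendsto_measure_iInter_atTop (μ := ν)
    (fun n => (hmeas n).nullMeasurableSet) hanti ⟨0, measure_ne_top _ _⟩
  rw [hiInter] at h1
  exact (ENNReal.tendsto_toReal (measure_ne_top _ _)).comp h1

lemma ae_to_all
    (h : ∀ᵐ z : ℝ×ℝ ∂volume, dcR ν z.1 z.2 = dcP ν z.1 * dcQ ν z.2) :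
    ∀ x y : ℝ, dcR ν x y = dcP ν x * dcQ ν y := by
  intro x y
  have key : ∀ ε : ℝ, 0 < ε → ε ≤ 1 → |dcR ν x y - dcP ν x * dcQ ν y| ≤ 5 * ε := by
    intro ε hε hε1
    obtain ⟨N1, hN1⟩ := Metric.tendsto_atTop.mp (tendsto_dcR ν x y) ε hε
    obtain ⟨N2, hN2⟩ := Metric.tendsto_atTop.mp (tendsto_dcP ν x) ε hε
    obtain ⟨N3, hN3⟩ := Metric.tendsto_atTop.mp (tendsto_dcQ ν y) ε hε
    set n : ℕ := max N1 (max N2 N3) with hn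
    have hnR := hN1 n (le_max_left _ _)
    have hnP := hN2 n (le_trans (le_max_left _ _) (le_max_right _ _))
    have hnQ := hN3 n (le_trans (le_max_right _ _) (le_max_right _ _))
    rw [Real.dist_eq] at hnR hnP hnQ
    set δ : ℝ := 1/((n:ℝ)+1) with hδdef
    have hδ : 0 < δ := by positivity
    rw [MeasureTheory.ae_iff] at h
    set T : Set (ℝ×ℝ) := Set.Ioc x (x+δ) ×ˢ Set.Ioc y (y+δ) with hT
    have hTpos : volume T ≠ 0 := by
      rw [hT, Measure.volume_eq_prod, Measure.prod_prod, Real.volume_Ioc, Real.volume_Ioc]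
      have : x + δ - x = δ := by ring
      have h2 : y + δ - y = δ := by ring
      rw [this, h2]
      exact mul_ne_zero (by simp [ENNReal.ofReal_eq_zero]; linarith)
        (by simp [ENNReal.ofReal_eq_zero]; linarith)
    have hnsub : ¬ T ⊆ {z : ℝ×ℝ | ¬ dcR ν z.1 z.2 = dcP ν z.1 * dcQ ν z.2} := by
      intro hsub
      exact hTpos (le_antisymm (h ▸ measure_mono hsub) zero_le)
    obtain ⟨z', hz'T, hz'⟩ := Set.not_subset.mp hnsub
    have heq : dcR ν z'.1 z'.2 = dcP ν z'.1 * dcQ ν z'.2 := not_not.mp hz'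
    obtain ⟨hz'x, hz'y⟩ := hz'T
    -- monotonicity bounds
    have hb1 : dcR ν x y ≤ dcR ν z'.1 z'.2 := dcR_mono ν hz'x.1.le hz'y.1.le
    have hb2 : dcR ν z'.1 z'.2 ≤ dcR ν (x+δ) (y+δ) := dcR_mono ν hz'x.2 hz'y.2
    have hp1 : dcP ν x ≤ dcP ν z'.1 := dcP_mono ν hz'x.1.le
    have hp2 : dcP ν z'.1 ≤ dcP ν (x+δ) := dcP_mono ν hz'x.2
    have hq1 : dcQ ν y ≤ dcQ ν z'.2 := dcQ_mono ν hz'y.1.le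
    have hq2 : dcQ ν z'.2 ≤ dcQ ν (y+δ) := dcQ_mono ν hz'y.2
    have hRδ : dcR ν (x+δ) (y+δ) < dcR ν x y + ε := by
      have := abs_lt.mp hnR; linarith [this.2]
    have hPδ : dcP ν (x+δ) < dcP ν x + ε := by
      have := abs_lt.mp hnP; linarith [this.2]
    have hQδ : dcQ ν (y+δ) < dcQ ν y + ε := by
      have := abs_lt.mp hnQ; linarith [this.2]
    have hP0 : 0 ≤ dcP ν x := dcP_nonneg ν x
    have hQ0 : 0 ≤ dcQ ν y := dcQ_nonneg ν y
    have hP1 : dcP ν x ≤ 1 := dcP_le_one ν x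
    have hQ1 : dcQ ν y ≤ 1 := dcQ_le_one ν y
    have hupper : dcP ν z'.1 * dcQ ν z'.2 ≤ (dcP ν x + ε) * (dcQ ν y + ε) := by
      apply mul_le_mul (by linarith) (by linarith) (dcQ_nonneg ν z'.2) (by linarith)
    have hlower : dcP ν x * dcQ ν y ≤ dcP ν z'.1 * dcQ ν z'.2 :=
      mul_le_mul hp1 hq1 hQ0 (dcP_nonneg ν z'.1)
    rw [abs_le]
    constructor
    · nlinarith
    · nlinarith
  by_contra hne
  set d := |dcR ν x y - dcP ν x * dcQ ν y| with hd
  have habs : 0 < d := abs_pos.mpr (sub_ne_zero.mpr hne)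
  have h1 := key (min 1 (d/6)) (lt_min one_pos (by linarith)) (min_le_left _ _)
  have h2 : min 1 (d/6) ≤ d/6 := min_le_right _ _
  linarith

lemma eq_prod_of_cdf (h : ∀ x y : ℝ, dcR ν x y = dcP ν x * dcQ ν y) :
    ν = (ν.map Prod.fst).prod (ν.map Prod.snd) := by
  haveI h1i : IsProbabilityMeasure (ν.map Prod.fst) :=
    Measure.isProbabilityMeasure_map measurable_fst.aemeasurable
  haveI h2i : IsProbabilityMeasure (ν.map Prod.snd) :=
    Measure.isProbabilityMeasure_map measurable_snd.aemeasurable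
  have hspan : IsCountablySpanning (Set.range (Set.Iic : ℝ → Set ℝ)) := by
    refine ⟨fun n => Set.Iic n, fun n => ⟨n, rfl⟩, ?_⟩
    ext u
    simp only [Set.mem_iUnion, Set.mem_Iic, Set.mem_univ, iff_true]
    exact exists_nat_ge u
  have hgen : (inferInstance : MeasurableSpace (ℝ×ℝ)) = MeasurableSpace.generateFrom
      (Set.image2 (· ×ˢ ·) (Set.range Set.Iic) (Set.range Set.Iic)) := by
    have h1 : (inferInstance : MeasurableSpace ℝ)
        = MeasurableSpace.generateFrom (Set.range Set.Iic) :=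
      BorelSpace.measurable_eq.trans (borel_eq_generateFrom_Iic ℝ)
    calc (inferInstance : MeasurableSpace (ℝ×ℝ))
        = MeasurableSpace.prod inferInstance inferInstance := rfl
      _ = MeasurableSpace.prod (MeasurableSpace.generateFrom (Set.range Set.Iic))
            (MeasurableSpace.generateFrom (Set.range Set.Iic)) := by rw [← h1]
      _ = MeasurableSpace.generateFrom
            (Set.image2 (· ×ˢ ·) (Set.range Set.Iic) (Set.range Set.Iic)) :=
          generateFrom_prod_eq hspan hspan
  refine MeasureTheory.ext_of_generate_finite _ hgen
    (IsPiSystem.prod isPiSystem_Iic isPiSystem_Iic) ?_ ?_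
  · rintro s ⟨s1, ⟨a, rfl⟩, s2, ⟨b, rfl⟩, rfl⟩
    show ν (Set.Iic a ×ˢ Set.Iic b)
      = ((ν.map Prod.fst).prod (ν.map Prod.snd)) (Set.Iic a ×ˢ Set.Iic b)
    rw [Measure.prod_prod, Measure.map_apply measurable_fst measurableSet_Iic,
      Measure.map_apply measurable_snd measurableSet_Iic]
    have hset : Set.Iic a ×ˢ Set.Iic b = {p : ℝ×ℝ | p.1 ≤ a ∧ p.2 ≤ b} := by
      ext p; simp [Set.mem_prod, Prod.le_def]
    have hs1 : Prod.fst ⁻¹' Set.Iic a = {p : ℝ×ℝ | p.1 ≤ a} := rfl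
    have hs2 : Prod.snd ⁻¹' Set.Iic b = {p : ℝ×ℝ | p.2 ≤ b} := rfl
    rw [hset, hs1, hs2]
    have hab := h a b
    unfold dcR dcP dcQ at hab
    rw [← ENNReal.toReal_mul] at hab
    exact (ENNReal.toReal_eq_toReal_iff' (measure_ne_top _ _)
      (ENNReal.mul_ne_top (measure_ne_top _ _) (measure_ne_top _ _))).mp hab
  · simp

lemma cdf_of_prod (h : ν = (ν.map Prod.fst).prod (ν.map Prod.snd)) :
    ∀ x y : ℝ, dcR ν x y = dcP ν x * dcQ ν y := by
  intro x y
  have key : ∀ (s t : Set ℝ), MeasurableSet s → MeasurableSet t →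
      ν (s ×ˢ t) = (ν.map Prod.fst) s * (ν.map Prod.snd) t := by
    intro s t hs ht
    conv_lhs => rw [h]
    rw [Measure.prod_prod]
  have hset : {p : ℝ×ℝ | p.1 ≤ x ∧ p.2 ≤ y} = Set.Iic x ×ˢ Set.Iic y := by
    ext p; simp [Set.mem_prod, Prod.le_def]
  have h1 : {p : ℝ×ℝ | p.1 ≤ x} = Set.Iic x ×ˢ (Set.univ : Set ℝ) := by
    ext p; simp [Set.mem_prod, Prod.le_def]
  have h2 : {p : ℝ×ℝ | p.2 ≤ y} = (Set.univ : Set ℝ) ×ˢ Set.Iic y := by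
    ext p; simp [Set.mem_prod, Prod.le_def]
  haveI h1i : IsProbabilityMeasure (ν.map Prod.fst) :=
    Measure.isProbabilityMeasure_map measurable_fst.aemeasurable
  haveI h2i : IsProbabilityMeasure (ν.map Prod.snd) :=
    Measure.isProbabilityMeasure_map measurable_snd.aemeasurable
  unfold dcR dcP dcQ
  rw [hset, h1, h2, key _ _ measurableSet_Iic measurableSet_Iic,
    key _ _ measurableSet_Iic MeasurableSet.univ,
    key _ _ MeasurableSet.univ measurableSet_Iic]
  simp [measure_univ, ENNReal.toReal_mul]

end Cont
section MemLp

lemma memLp_comp_fst {α β : Type*} [MeasurableSpace α] [MeasurableSpace β]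
    {m1 : Measure α} {m2 : Measure β} [IsProbabilityMeasure m1] [IsProbabilityMeasure m2]
    {f : α → ℝ} (h : MemLp f 2 m1) : MemLp (fun w : α × β => f w.1) 2 (m1.prod m2) := by
  have hmap : (m1.prod m2).map Prod.fst = m1 := by
    rw [Measure.map_fst_prod]; simp
  have h' : MemLp f 2 ((m1.prod m2).map Prod.fst) := by rw [hmap]; exact h
  exact (memLp_map_measure_iff (by rw [hmap]; exact h.aestronglyMeasurable)
    measurable_fst.aemeasurable).mp h'

lemma memLp_comp_snd {α β : Type*} [MeasurableSpace α] [MeasurableSpace β]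
    {m1 : Measure α} {m2 : Measure β} [IsProbabilityMeasure m1] [IsProbabilityMeasure m2]
    {f : β → ℝ} (h : MemLp f 2 m2) : MemLp (fun w : α × β => f w.2) 2 (m1.prod m2) := by
  have hmap : (m1.prod m2).map Prod.snd = m2 := by
    rw [Measure.map_snd_prod]; simp
  have h' : MemLp f 2 ((m1.prod m2).map Prod.snd) := by rw [hmap]; exact h
  exact (memLp_map_measure_iff (by rw [hmap]; exact h.aestronglyMeasurable)
    measurable_snd.aemeasurable).mp h'

lemma l2_mul_integrable {α : Type*} [MeasurableSpace α] {m : Measure α} {f g : α → ℝ}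
    (hf : MemLp f 2 m) (hg : MemLp g 2 m) : Integrable (fun a => f a * g a) m := by
  have h121 : (1 : ℝ≥0∞)/1 = 1/2 + 1/2 := by
    rw [ENNReal.add_halves, one_div, inv_one]
  have h := MemLp.smul (φ := f) (f := g) (r := 1) hg hf
  exact memLp_one_iff_integrable.mp h

end MemLp

theorem squared_distance_covariance_eq_zero_iff_indep
    {Ω : Type*} [MeasurableSpace Ω] (μ : Measure Ω) [IsProbabilityMeasure μ]
    (X Y : Ω → ℝ) (hXm : Measurable X) (hYm : Measurable Y)
    (hX : MemLp X 2 μ) (hY : MemLp Y 2 μ)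
    (Z : Fin 3 → Ω → ℝ × ℝ) (hmeas : ∀ i, Measurable (Z i))
    (hindep : iIndepFun Z μ)
    (hlaw : ∀ i, μ.map (Z i) = μ.map (fun ω => (X ω, Y ω))) :
    ((∫ ω, |(Z 0 ω).1 - (Z 1 ω).1| * |(Z 0 ω).2 - (Z 1 ω).2| ∂μ)
        + (∫ ω, |(Z 0 ω).1 - (Z 1 ω).1| ∂μ) * (∫ ω, |(Z 0 ω).2 - (Z 1 ω).2| ∂μ)
        - 2 * ∫ ω, |(Z 0 ω).1 - (Z 1 ω).1| * |(Z 0 ω).2 - (Z 2 ω).2| ∂μ) = 0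
      ↔ μ.map (fun ω => (X ω, Y ω)) = (μ.map X).prod (μ.map Y) := by
  have hXY : Measurable (fun ω => (X ω, Y ω)) := hXm.prodMk hYm
  set ν : Measure (ℝ × ℝ) := μ.map (fun ω => (X ω, Y ω)) with hνdef
  haveI hνP : IsProbabilityMeasure ν := Measure.isProbabilityMeasure_map hXY.aemeasurable
  -- joint laws
  have hI01 : IndepFun (Z 0) (Z 1) μ := hindep.indepFun (show (0 : Fin 3) ≠ 1 by decide)
  have map01 : μ.map (fun ω => (Z 0 ω, Z 1 ω)) = ν.prod ν := by
    have h := (indepFun_iff_map_prod_eq_prod_map_map (hmeas 0).aemeasurable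
      (hmeas 1).aemeasurable).mp hI01
    rw [hlaw 0, hlaw 1] at h
    exact h
  have hI12 : IndepFun (Z 1) (Z 2) μ := hindep.indepFun (show (1 : Fin 3) ≠ 2 by decide)
  have map12 : μ.map (fun ω => (Z 1 ω, Z 2 ω)) = ν.prod ν := by
    have h := (indepFun_iff_map_prod_eq_prod_map_map (hmeas 1).aemeasurable
      (hmeas 2).aemeasurable).mp hI12
    rw [hlaw 1, hlaw 2] at h
    exact h
  have hI012 : IndepFun (Z 0) (fun ω => (Z 1 ω, Z 2 ω)) μ :=
    (hindep.indepFun_prodMk hmeas 1 2 0 (by decide) (by decide)).symm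
  have map012 : μ.map (fun ω => (Z 0 ω, (Z 1 ω, Z 2 ω))) = ν.prod (ν.prod ν) := by
    have h := (indepFun_iff_map_prod_eq_prod_map_map (hmeas 0).aemeasurable
      ((hmeas 1).prodMk (hmeas 2)).aemeasurable).mp hI012
    rw [hlaw 0, map12] at h
    exact h
  -- transport the three integrals to the law level
  have hG1 : Measurable (fun w : (ℝ×ℝ)×(ℝ×ℝ) => |w.1.1 - w.2.1| * |w.1.2 - w.2.2|) :=
    ((measurable_fst.fst.sub measurable_snd.fst).abs).mul
      ((measurable_fst.snd.sub measurable_snd.snd).abs)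
  have hG2 : Measurable (fun w : (ℝ×ℝ)×(ℝ×ℝ) => |w.1.1 - w.2.1|) :=
    (measurable_fst.fst.sub measurable_snd.fst).abs
  have hG3 : Measurable (fun w : (ℝ×ℝ)×(ℝ×ℝ) => |w.1.2 - w.2.2|) :=
    (measurable_fst.snd.sub measurable_snd.snd).abs
  have hG4 : Measurable (fun w : (ℝ×ℝ)×((ℝ×ℝ)×(ℝ×ℝ)) =>
      |w.1.1 - w.2.1.1| * |w.1.2 - w.2.2.2|) :=
    ((measurable_fst.fst.sub measurable_snd.fst.fst).abs).mul
      ((measurable_fst.snd.sub measurable_snd.snd.snd).abs)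
  have t1 : ∫ ω, |(Z 0 ω).1 - (Z 1 ω).1| * |(Z 0 ω).2 - (Z 1 ω).2| ∂μ
      = ∫ w : (ℝ×ℝ)×(ℝ×ℝ), |w.1.1 - w.2.1| * |w.1.2 - w.2.2| ∂(ν.prod ν) := by
    have h := integral_map (μ := μ) ((hmeas 0).prodMk (hmeas 1)).aemeasurable
      hG1.aestronglyMeasurable
    rw [map01] at h
    exact h.symm
  have t2 : ∫ ω, |(Z 0 ω).1 - (Z 1 ω).1| ∂μ
      = ∫ w : (ℝ×ℝ)×(ℝ×ℝ), |w.1.1 - w.2.1| ∂(ν.prod ν) := by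
    have h := integral_map (μ := μ) ((hmeas 0).prodMk (hmeas 1)).aemeasurable
      hG2.aestronglyMeasurable
    rw [map01] at h
    exact h.symm
  have t3 : ∫ ω, |(Z 0 ω).2 - (Z 1 ω).2| ∂μ
      = ∫ w : (ℝ×ℝ)×(ℝ×ℝ), |w.1.2 - w.2.2| ∂(ν.prod ν) := by
    have h := integral_map (μ := μ) ((hmeas 0).prodMk (hmeas 1)).aemeasurable
      hG3.aestronglyMeasurable
    rw [map01] at h
    exact h.symm
  have t4 : ∫ ω, |(Z 0 ω).1 - (Z 1 ω).1| * |(Z 0 ω).2 - (Z 2 ω).2| ∂μ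
      = ∫ w : (ℝ×ℝ)×((ℝ×ℝ)×(ℝ×ℝ)), |w.1.1 - w.2.1.1| * |w.1.2 - w.2.2.2|
          ∂(ν.prod (ν.prod ν)) := by
    have h := integral_map (μ := μ) ((hmeas 0).prodMk ((hmeas 1).prodMk (hmeas 2))).aemeasurable
      hG4.aestronglyMeasurable
    rw [map012] at h
    exact h.symm
  -- integrability from L²
  have mX : MemLp (fun p : ℝ×ℝ => p.1) 2 ν :=
    (memLp_map_measure_iff measurable_fst.aestronglyMeasurable hXY.aemeasurable).mpr hX
  have mY : MemLp (fun p : ℝ×ℝ => p.2) 2 ν :=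
    (memLp_map_measure_iff measurable_snd.aestronglyMeasurable hXY.aemeasurable).mpr hY
  have m11 : MemLp (fun w : (ℝ×ℝ)×(ℝ×ℝ) => w.1.1) 2 (ν.prod ν) := memLp_comp_fst mX
  have m21 : MemLp (fun w : (ℝ×ℝ)×(ℝ×ℝ) => w.2.1) 2 (ν.prod ν) := memLp_comp_snd mX
  have m12 : MemLp (fun w : (ℝ×ℝ)×(ℝ×ℝ) => w.1.2) 2 (ν.prod ν) := memLp_comp_fst mY
  have m22 : MemLp (fun w : (ℝ×ℝ)×(ℝ×ℝ) => w.2.2) 2 (ν.prod ν) := memLp_comp_snd mY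
  have d1 : MemLp (fun w : (ℝ×ℝ)×(ℝ×ℝ) => w.1.1 - w.2.1) 2 (ν.prod ν) := m11.sub m21
  have d2 : MemLp (fun w : (ℝ×ℝ)×(ℝ×ℝ) => w.1.2 - w.2.2) 2 (ν.prod ν) := m12.sub m22
  have Int1 : Integrable (fun w : (ℝ×ℝ)×(ℝ×ℝ) =>
      |w.1.1 - w.2.1| * |w.1.2 - w.2.2|) (ν.prod ν) := by
    have h := (l2_mul_integrable d1 d2).abs
    have heq : (fun w : (ℝ×ℝ)×(ℝ×ℝ) => |w.1.1 - w.2.1| * |w.1.2 - w.2.2|)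
        = fun w : (ℝ×ℝ)×(ℝ×ℝ) => |(w.1.1 - w.2.1) * (w.1.2 - w.2.2)| := by
      funext w; rw [abs_mul]
    rw [heq]
    exact h
  have Int2A : Integrable (fun w : (ℝ×ℝ)×(ℝ×ℝ) => |w.1.1 - w.2.1|) (ν.prod ν) :=
    (d1.integrable one_le_two).abs
  have Int2B : Integrable (fun w : (ℝ×ℝ)×(ℝ×ℝ) => |w.1.2 - w.2.2|) (ν.prod ν) :=
    (d2.integrable one_le_two).abs
  have m11' : MemLp (fun w : (ℝ×ℝ)×((ℝ×ℝ)×(ℝ×ℝ)) => w.1.1) 2 (ν.prod (ν.prod ν)) :=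
    memLp_comp_fst mX
  have m12' : MemLp (fun w : (ℝ×ℝ)×((ℝ×ℝ)×(ℝ×ℝ)) => w.1.2) 2 (ν.prod (ν.prod ν)) :=
    memLp_comp_fst mY
  have m211 : MemLp (fun w : (ℝ×ℝ)×((ℝ×ℝ)×(ℝ×ℝ)) => w.2.1.1) 2 (ν.prod (ν.prod ν)) :=
    memLp_comp_snd (memLp_comp_fst mX)
  have m222 : MemLp (fun w : (ℝ×ℝ)×((ℝ×ℝ)×(ℝ×ℝ)) => w.2.2.2) 2 (ν.prod (ν.prod ν)) :=
    memLp_comp_snd (memLp_comp_snd mY)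
  have d1' : MemLp (fun w : (ℝ×ℝ)×((ℝ×ℝ)×(ℝ×ℝ)) => w.1.1 - w.2.1.1) 2
      (ν.prod (ν.prod ν)) := m11'.sub m211
  have d2' : MemLp (fun w : (ℝ×ℝ)×((ℝ×ℝ)×(ℝ×ℝ)) => w.1.2 - w.2.2.2) 2
      (ν.prod (ν.prod ν)) := m12'.sub m222
  have Int4 : Integrable (fun w : (ℝ×ℝ)×((ℝ×ℝ)×(ℝ×ℝ)) =>
      |w.1.1 - w.2.1.1| * |w.1.2 - w.2.2.2|) (ν.prod (ν.prod ν)) := by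
    have h := (l2_mul_integrable d1' d2').abs
    have heq : (fun w : (ℝ×ℝ)×((ℝ×ℝ)×(ℝ×ℝ)) => |w.1.1 - w.2.1.1| * |w.1.2 - w.2.2.2|)
        = fun w : (ℝ×ℝ)×((ℝ×ℝ)×(ℝ×ℝ)) => |(w.1.1 - w.2.1.1) * (w.1.2 - w.2.2.2)| := by
      funext w; rw [abs_mul]
    rw [heq]
    exact h
  obtain ⟨hid, hie0⟩ := law_identity ν Int1 Int2A Int2B Int4
  rw [t1, t2, t3, t4, hid]
  -- marginals
  have hfst : ν.map Prod.fst = μ.map X := by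
    rw [hνdef, Measure.map_map measurable_fst hXY]
    rfl
  have hsnd : ν.map Prod.snd = μ.map Y := by
    rw [hνdef, Measure.map_map measurable_snd hXY]
    rfl
  constructor
  · intro h0
    have hnn : ∀ z : ℝ×ℝ, 0 ≤ e0v ν z := fun z => by unfold e0v; positivity
    have hae : e0v ν =ᵐ[(volume : Measure (ℝ×ℝ))] 0 :=
      (integral_eq_zero_iff_of_nonneg hnn hie0).mp h0
    have hae' : ∀ᵐ z : ℝ×ℝ ∂volume, dcR ν z.1 z.2 = dcP ν z.1 * dcQ ν z.2 := by
      filter_upwards [hae] with z hz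
      have hz' : 4*(dcR ν z.1 z.2 - dcP ν z.1 * dcQ ν z.2)^2 = 0 := hz
      nlinarith [sq_nonneg (dcR ν z.1 z.2 - dcP ν z.1 * dcQ ν z.2)]
    have hres := eq_prod_of_cdf ν (ae_to_all ν hae')
    rwa [hfst, hsnd] at hres
  · intro hprod
    have hν : ν = (ν.map Prod.fst).prod (ν.map Prod.snd) := by
      rw [hfst, hsnd]; exact hprod
    have hall := cdf_of_prod ν hν
    have hzero : ∀ z : ℝ×ℝ, e0v ν z = 0 := fun z => by
      unfold e0v; rw [hall z.1 z.2]; ring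
    rw [show e0v ν = (fun _ : ℝ×ℝ => (0:ℝ)) from funext hzero, integral_zero]
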